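/- arXiv:2103.10061 — 10 statements merged into one kernel-verified Lean document; each statement's English description precedes it below -/
import Mathlib

section
/- Let q > 1 be a real number, n ≥ 1 an integer, and h an integer with 0 ≤ h ≤ n. Define x_i = (-q)^{n+1-i} for 1 ≤ i ≤ n, x_i = (-q)^{i-2n-1} for n+1 ≤ i ≤ 2n, and x_{2n+1} = 1; define α_{i,h} = (-q)^{(n+1-i)(2n-h)} for 1 ≤ i ≤ n, α_{i,h} = (-q)^{(2n+1-i)(2n+h)} for n+1 ≤ i ≤ 2n, and α_{2n+1,h} = 1. Let 𝔅 be the (2n+1)×(2n+1) real matrix whose i-th row (1 ≤ i ≤ 2n+1) is (m_{i,0}, …, m_{i,n-1}, n_{i,0}, …, n_{i,n-1}, m_{i,n}), where m_{i,t} = (-q)^{(n-t)(i-(2n-h+1)) - 2t(2n-h)} and n_{i,t} = q^{-(2n-h)^2 + h^2} · (-q)^{-(n-t)(i-(2n-h+1)) - 2th}. Then 𝔅 is invertible, and if c ∈ ℝ^{2n+1} is the unique vector satisfying 𝔅c = (-q)^{-2n(2n-h)} · b where b_j = j - (2n-h+1) for 1 ≤ j ≤ 2n+1, then for every 1 ≤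 i ≤ 2n the i-th component of c equals α_{i,h}^{-1} · (∏_{1 ≤ m ≤ 2n, m ≠ i}(1 - x_m)) / (∏_{1 ≤ m ≤ 2n+1, m ≠ i}(x_m - x_i)). -/
/-!
Write `x_j` for the nodes and `ζ = (-q)^(-2n(2n-h))`. Every entry factors as
`𝔅_{ij} = x_j^(i-1) · ζ α_{j,h}` (with `α_{2n+1,h} = 1`; the even power of `q` in `n_{i,t}` is an
even power of `-q`), so `𝔅 = Vᵀ · diag(ζ α)` with `V` the Vandermonde matrix of the `2n+1`
distinct nodes, and `𝔅` is invertible. The system becomes `∑_j x_j^k (α_j c_j) = k - (2n-h)`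
for `0 ≤ k ≤ 2n`. Differentiating the Lagrange interpolation of `X^k` at `1` gives
`∑_j x_j^k L_j'(1) = k`, and `x_{2n+1} = 1`, so `α_j c_j = L_j'(1)` for `j ≤ 2n`. Since `1` is
itself the node `x_{2n+1}`, only one term of the product rule survives in `L_j'(1)`, which is
the stated quotient.
-/

/-- The nodes x_1, …, x_{2n+1} (argument `i` is the 1-based index). -/
noncomputable def xNode (q : ℝ) (n : ℕ) (i : ℕ) : ℝ :=
  if i ≤ n then (-q) ^ ((n : ℤ) + 1 - (i : ℤ))
  else if i ≤ 2 * n then (-q) ^ ((i : ℤ) - 2 * (n : ℤ) - 1)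
  else 1

/-- The constants α_{i,h} (argument `i` is the 1-based index). -/
noncomputable def alphaC (q : ℝ) (n h : ℕ) (i : ℕ) : ℝ :=
  if i ≤ n then (-q) ^ (((n : ℤ) + 1 - (i : ℤ)) * (2 * (n : ℤ) - (h : ℤ)))
  else if i ≤ 2 * n then (-q) ^ ((2 * (n : ℤ) + 1 - (i : ℤ)) * (2 * (n : ℤ) + (h : ℤ)))
  else 1

/-- The entries m_{i,t} (with `i` the 1-based row index). -/
noncomputable def mEnt (q : ℝ) (n h : ℕ) (i t : ℕ) : ℝ :=
  (-q) ^ (((n : ℤ) - (t : ℤ)) * ((i : ℤ) - (2 * (n : ℤ) - (h : ℤ) + 1))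
      - 2 * (t : ℤ) * (2 * (n : ℤ) - (h : ℤ)))

/-- The entries n_{i,t} (with `i` the 1-based row index). -/
noncomputable def nEnt (q : ℝ) (n h : ℕ) (i t : ℕ) : ℝ :=
  q ^ (-(2 * (n : ℤ) - (h : ℤ)) ^ 2 + (h : ℤ) ^ 2) *
    (-q) ^ (-((n : ℤ) - (t : ℤ)) * ((i : ℤ) - (2 * (n : ℤ) - (h : ℤ) + 1))
      - 2 * (t : ℤ) * (h : ℤ))

/-- The matrix 𝔅, whose i-th row is (m_{i,0},…,m_{i,n-1}, n_{i,0},…,n_{i,n-1}, m_{i,n}). -/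
noncomputable def BB (q : ℝ) (n h : ℕ) : Matrix (Fin (2 * n + 1)) (Fin (2 * n + 1)) ℝ :=
  Matrix.of fun i j =>
    if (j : ℕ) < n then mEnt q n h ((i : ℕ) + 1) (j : ℕ)
    else if (j : ℕ) < 2 * n then nEnt q n h ((i : ℕ) + 1) ((j : ℕ) - n)
    else mEnt q n h ((i : ℕ) + 1) n

open Polynomial Finset
open scoped Matrix

namespace Lagrange

variable {F ι : Type*} [Field F] [DecidableEq ι] {s : Finset ι} {v : ι → F}

theorem sum_eval_mul_derivative_basis_eval {p : F[X]} (hvs : Set.InjOn v s)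
    (hp : p.degree < #s) (z : F) :
    ∑ i ∈ s, p.eval (v i) * (Lagrange.basis s v i).derivative.eval z =
      p.derivative.eval z := by
  conv_rhs => rw [eq_interpolate hvs hp, interpolate_apply]
  simp [eval_finsetSum]

theorem derivative_basis_eval_node {i i₀ : ι} (hi₀ : i₀ ∈ s) (hne : i ≠ i₀) :
    (Lagrange.basis s v i).derivative.eval (v i₀) =
      (∏ m ∈ (s.erase i).erase i₀, (v i₀ - v m)) / ∏ m ∈ s.erase i, (v i - v m) := by
  have hi₀' : i₀ ∈ s.erase i := mem_erase.mpr ⟨hne.symm, hi₀⟩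
  rw [Lagrange.basis, ← mul_prod_erase _ _ hi₀', ← mul_prod_erase _ _ hi₀', derivative_mul]
  simp only [eval_add, eval_mul, eval_prod, basisDivisor, derivative_C_mul, derivative_sub,
    derivative_X, derivative_C, sub_zero, mul_one, eval_C, eval_sub, eval_X]
  rw [prod_mul_distrib, prod_inv_distrib, div_eq_mul_inv, mul_inv]
  ring

end Lagrange

theorem Finset.prod_sub_comm_of_even_card {ι R : Type*} [CommRing R] {t : Finset ι}
    (ht : Even #t) (f : ι → R) (a : R) :
    ∏ m ∈ t, (a - f m) = ∏ m ∈ t, (f m - a) := by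
  rw [← one_mul (∏ m ∈ t, (f m - a)), ← ht.neg_one_pow, ← prod_neg]
  simp only [neg_sub]

theorem zpow_right_injective_of_one_lt_abs {a : ℝ} (ha : 1 < |a|) :
    Function.Injective fun k : ℤ => a ^ k := fun k l hkl =>
  zpow_right_injective₀ (zero_lt_one.trans ha) ha.ne' <| by
    simpa only [abs_zpow] using congrArg abs hkl

theorem zpow_eq_zpow_pow_mul_zpow {G₀ : Type*} [GroupWithZero G₀] {a : G₀} (ha : a ≠ 0)
    {A B C : ℤ} (i : ℕ) (h : A = B * i + C) : a ^ A = (a ^ B) ^ i * a ^ C := by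
  rw [h, zpow_add₀ ha, zpow_mul, zpow_natCast]

theorem Fin.sum_univ_eq_sum_Icc {M : Type*} [AddCommMonoid M] (N : ℕ) (f : ℕ → M) :
    ∑ j : Fin N, f (j + 1) = ∑ m ∈ Icc 1 N, f m := by
  rw [Fin.sum_univ_eq_sum_range (fun k => f (k + 1)), range_eq_Ico, sum_Ico_add', zero_add,
    Ico_add_one_right_eq_Icc]

section Nodes

def xNodeExp (n m : ℕ) : ℤ :=
  if m ≤ n then n + 1 - m else if m ≤ 2 * n then m - 2 * n - 1 else 0

variable {q : ℝ} {n : ℕ}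

theorem xNode_eq_zpow (q : ℝ) (n m : ℕ) : xNode q n m = (-q) ^ xNodeExp n m := by
  unfold xNode xNodeExp
  split_ifs <;> simp

theorem xNode_injOn (hq : 1 < q) : Set.InjOn (xNode q n) (Icc 1 (2 * n + 1)) := by
  intro a ha b hb hab
  simp only [coe_Icc, Set.mem_Icc] at ha hb
  rw [xNode_eq_zpow, xNode_eq_zpow] at hab
  have hexp := zpow_right_injective_of_one_lt_abs (by rwa [abs_neg, abs_of_pos (by linarith)]) hab
  unfold xNodeExp at hexp
  split_ifs at hexp <;> omega

theorem xNode_two_mul_add_one (q : ℝ) (n : ℕ) : xNode q n (2 * n + 1) = 1 := by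
  rw [xNode, if_neg (by omega), if_neg (by omega)]

theorem alphaC_ne_zero (hq : 1 < q) (h m : ℕ) : alphaC q n h m ≠ 0 := by
  have hq0 : -q ≠ 0 := by linarith
  unfold alphaC
  split_ifs
  · exact zpow_ne_zero _ hq0
  · exact zpow_ne_zero _ hq0
  · exact one_ne_zero

end Nodes

section Matrix

variable {q : ℝ} {n : ℕ}

theorem BB_apply (hq : 1 < q) (h : ℕ) (i j : Fin (2 * n + 1)) :
    BB q n h i j = xNode q n (j + 1) ^ (i : ℕ) *
      ((-q) ^ (-2 * (n : ℤ) * (2 * n - h)) * alphaC q n h (j + 1)) := by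
  have hq0 : -q ≠ 0 := by linarith
  have hj := j.isLt
  simp only [BB, Matrix.of_apply]
  split_ifs with hj₁ hj₂
  · rw [xNode, alphaC, if_pos (by omega), if_pos (by omega), mEnt, ← zpow_add₀ hq0]
    exact zpow_eq_zpow_pow_mul_zpow hq0 _ (by push_cast; ring)
  · rw [xNode, alphaC, if_neg (by omega), if_pos (by omega), if_neg (by omega),
      if_pos (by omega), nEnt, ← (Even.neg_zpow ⟨2 * n * h - 2 * n ^ 2, by ring⟩ q),
      ← zpow_add₀ hq0, ← zpow_add₀ hq0]
    exact zpow_eq_zpow_pow_mul_zpow hq0 _ (by push_cast [Nat.cast_sub (le_of_not_gt hj₁)]; ring)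
  · rw [show (j : ℕ) + 1 = 2 * n + 1 by omega, xNode_two_mul_add_one, alphaC, if_neg (by omega),
      if_neg (by omega), one_pow, one_mul, mul_one, mEnt]
    congr 1
    ring

theorem BB_eq_transpose_vandermonde_mul_diagonal (hq : 1 < q) (h : ℕ) :
    BB q n h = (Matrix.vandermonde fun j : Fin (2 * n + 1) => xNode q n (j + 1))ᵀ *
      Matrix.diagonal fun j : Fin (2 * n + 1) =>
        (-q) ^ (-2 * (n : ℤ) * (2 * n - h)) * alphaC q n h (j + 1) := by
  ext i j
  rw [Matrix.mul_diagonal, Matrix.transpose_apply, Matrix.vandermonde_apply, BB_apply hq]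

theorem isUnit_BB (hq : 1 < q) (h : ℕ) : IsUnit (BB q n h) := by
  have hq0 : -q ≠ 0 := by linarith
  have hinj : Function.Injective fun j : Fin (2 * n + 1) => xNode q n (j + 1) := fun a b hab =>
    Fin.ext (by simpa using xNode_injOn hq (by simp [a.is_le]) (by simp [b.is_le]) hab)
  rw [BB_eq_transpose_vandermonde_mul_diagonal hq, Matrix.isUnit_iff_isUnit_det, Matrix.det_mul,
    Matrix.det_transpose, Matrix.det_diagonal, isUnit_iff_ne_zero]
  exact mul_ne_zero (Matrix.det_vandermonde_ne_zero_iff.mpr hinj)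
    (prod_ne_zero_iff.mpr fun j _ => mul_ne_zero (zpow_ne_zero _ hq0) (alphaC_ne_zero hq h _))

end Matrix

noncomputable def basisDerivAtOne (q : ℝ) (n m : ℕ) : ℝ :=
  (Lagrange.basis (Icc 1 (2 * n + 1)) (xNode q n) m).derivative.eval 1

noncomputable def BBSolution (q : ℝ) (n h : ℕ) (j : Fin (2 * n + 1)) : ℝ :=
  (alphaC q n h (j + 1))⁻¹ *
    (basisDerivAtOne q n (j + 1) - if j = Fin.last (2 * n) then 2 * (n : ℝ) - h else 0)

section Solution

variable {q : ℝ} {n : ℕ}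

theorem basisDerivAtOne_eq {m : ℕ} (hm₁ : 1 ≤ m) (hm₂ : m ≤ 2 * n) :
    basisDerivAtOne q n m =
      (∏ k ∈ (Icc 1 (2 * n)).erase m, (1 - xNode q n k)) /
        ∏ k ∈ (Icc 1 (2 * n + 1)).erase m, (xNode q n k - xNode q n m) := by
  have hm : m ∈ Icc 1 (2 * n + 1) := mem_Icc.mpr ⟨hm₁, by omega⟩
  have hderiv := Lagrange.derivative_basis_eval_node (v := xNode q n)
    (mem_Icc.mpr ⟨by omega, le_rfl⟩ : 2 * n + 1 ∈ Icc 1 (2 * n + 1)) (by omega : m ≠ 2 * n + 1)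
  have hcard : Even #((Icc 1 (2 * n + 1)).erase m) := by
    rw [card_erase_of_mem hm, Nat.card_Icc]
    exact ⟨n, by omega⟩
  rw [xNode_two_mul_add_one] at hderiv
  rw [basisDerivAtOne, hderiv, erase_right_comm, Icc_erase_right, Ico_add_one_right_eq_Icc,
    prod_sub_comm_of_even_card hcard]

theorem vandermonde_transpose_mulVec_basisDerivAtOne (hq : 1 < q) (r : ℝ) :
    (Matrix.vandermonde fun j : Fin (2 * n + 1) => xNode q n (j + 1))ᵀ *ᵥ
        (fun j => basisDerivAtOne q n (j + 1) - if j = Fin.last (2 * n) then r else 0) =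
      fun i : Fin (2 * n + 1) => ((i : ℕ) : ℝ) - r := by
  funext i
  have hpow : ∑ m ∈ Icc 1 (2 * n + 1), xNode q n m ^ (i : ℕ) * basisDerivAtOne q n m = i := by
    have hdeg : (X ^ (i : ℕ) : ℝ[X]).degree < #(Icc 1 (2 * n + 1)) := by
      rw [degree_X_pow, Nat.card_Icc]
      exact_mod_cast i.isLt
    simpa [basisDerivAtOne, derivative_X_pow] using
      Lagrange.sum_eval_mul_derivative_basis_eval (xNode_injOn hq) hdeg 1
  simp only [Matrix.mulVec, dotProduct, Matrix.transpose_apply, Matrix.vandermonde_apply,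
    mul_sub, sum_sub_distrib, mul_ite, mul_zero, sum_ite_eq', mem_univ, if_true,
    Fin.val_last, xNode_two_mul_add_one, one_pow, one_mul]
  rw [Fin.sum_univ_eq_sum_Icc (2 * n + 1) fun m => xNode q n m ^ (i : ℕ) * basisDerivAtOne q n m,
    hpow]

theorem BB_mulVec_BBSolution (hq : 1 < q) (h : ℕ) :
    BB q n h *ᵥ BBSolution q n h = fun j : Fin (2 * n + 1) =>
      (-q) ^ (-2 * (n : ℤ) * (2 * (n : ℤ) - (h : ℤ))) *
        (((j : ℕ) : ℝ) + 1 - (2 * (n : ℝ) - (h : ℝ) + 1)) := by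
  have hcancel : (Matrix.diagonal fun j : Fin (2 * n + 1) =>
      (-q) ^ (-2 * (n : ℤ) * (2 * n - h)) * alphaC q n h (j + 1)) *ᵥ BBSolution q n h =
      (-q) ^ (-2 * (n : ℤ) * (2 * n - h)) • fun j : Fin (2 * n + 1) =>
        basisDerivAtOne q n (j + 1) - if j = Fin.last (2 * n) then 2 * (n : ℝ) - h else 0 := by
    funext j
    simp only [Matrix.mulVec_diagonal, BBSolution, Pi.smul_apply, smul_eq_mul]
    rw [mul_assoc, mul_inv_cancel_left₀ (alphaC_ne_zero hq h _)]
  rw [BB_eq_transpose_vandermonde_mul_diagonal hq, ← Matrix.mulVec_mulVec, hcancel,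
    Matrix.mulVec_smul, vandermonde_transpose_mulVec_basisDerivAtOne hq]
  funext j
  simp only [Pi.smul_apply, smul_eq_mul]
  ring

end Solution

theorem stmt0_general (q : ℝ) (hq : 1 < q) (n h : ℕ) :
    IsUnit (BB q n h) ∧
    ∀ c : Fin (2 * n + 1) → ℝ,
      (BB q n h).mulVec c =
        (fun j : Fin (2 * n + 1) => (-q) ^ (-2 * (n : ℤ) * (2 * (n : ℤ) - (h : ℤ))) *
          (((j : ℕ) : ℝ) + 1 - (2 * (n : ℝ) - (h : ℝ) + 1))) →
      ∀ i : Fin (2 * n + 1), (i : ℕ) + 1 ≤ 2 * n →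
        c i = (alphaC q n h ((i : ℕ) + 1))⁻¹ *
          ((∏ m ∈ (Finset.Icc 1 (2 * n)).erase ((i : ℕ) + 1), (1 - xNode q n m)) /
            (∏ m ∈ (Finset.Icc 1 (2 * n + 1)).erase ((i : ℕ) + 1),
              (xNode q n m - xNode q n ((i : ℕ) + 1)))) := by
  refine ⟨isUnit_BB hq h, fun c hc i hi => ?_⟩
  obtain rfl : c = BBSolution q n h := Matrix.mulVec_injective_iff_isUnit.mpr (isUnit_BB hq h)
    (hc.trans (BB_mulVec_BBSolution hq h).symm)
  have hlast : i ≠ Fin.last (2 * n) := Fin.ne_of_val_ne (by rw [Fin.val_last]; omega)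
  rw [BBSolution, if_neg hlast, sub_zero, basisDerivAtOne_eq (by omega) hi]

theorem stmt0 (q : ℝ) (hq : 1 < q) (n h : ℕ) (hn : 1 ≤ n) (hh : h ≤ n) :
    IsUnit (BB q n h) ∧
    ∀ c : Fin (2 * n + 1) → ℝ,
      (BB q n h).mulVec c =
        (fun j : Fin (2 * n + 1) => (-q) ^ (-2 * (n : ℤ) * (2 * (n : ℤ) - (h : ℤ))) *
          (((j : ℕ) : ℝ) + 1 - (2 * (n : ℝ) - (h : ℝ) + 1))) →
      ∀ i : Fin (2 * n + 1), (i : ℕ) + 1 ≤ 2 * n →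
        c i = (alphaC q n h ((i : ℕ) + 1))⁻¹ *
          ((∏ m ∈ (Finset.Icc 1 (2 * n)).erase ((i : ℕ) + 1), (1 - xNode q n m)) /
            (∏ m ∈ (Finset.Icc 1 (2 * n + 1)).erase ((i : ℕ) + 1),
              (xNode q n m - xNode q n ((i : ℕ) + 1)))) :=
  stmt0_general q hq n h
end

section
/- Let K be a field, N ≥ 2 an integer, and x_1, …, x_N pairwise distinct elements of K with x_N = 1. Let 𝔛 be the N×N Vandermonde matrix with entries 𝔛_{j,i} = x_i^{j-1} for 1 ≤ i, j ≤ N; then 𝔛 is invertible, and writing (y_{i,j}) = 𝔛^{-1}, for every index 1 ≤ i ≤ N-1 and every scalar c ∈ K one has ∑_{j=1}^{N} y_{i,j} · (j·1_K - c) = (∏_{1 ≤ m ≤ N-1, m ≠ i}(1 - x_m)) / (∏_{1 ≤ m ≤ N, m ≠ i}(x_i - x_m)). In particular this sum is independent of c. (When N is odd, the denominator ∏_{m ≠ i}(x_i - x_m) equals ∏_{m ≠ i}(x_m - x_i).) -/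
/-! The `i`-th row of the inverse of the transposed Vandermonde matrix lists the coefficients of
the Lagrange basis polynomial `ℓᵢ = ∏_{m ≠ i} (X - xₘ) / (xᵢ - xₘ)`, so the weighted row sum
`∑ⱼ yᵢⱼ (j - c)` equals `ℓᵢ'(1) + (1 - c) ℓᵢ(1)`. Since `1` is a node other than `xᵢ`, we have
`ℓᵢ(1) = 0`, and in the product rule for `ℓᵢ'(1)` only the term in which the factor vanishing
at `1` is differentiated survives. -/

open Matrix Polynomial Finset

namespace Polynomial

variable {R : Type*} [CommRing R] {p : R[X]} {n : ℕ}

theorem sum_fin_coeff_eq_eval_one (hp : p.natDegree < n) :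
    ∑ j : Fin n, p.coeff j = p.eval 1 := by
  simp [eval_eq_sum_range' hp, Fin.sum_univ_eq_sum_range (fun j => p.coeff j)]

theorem sum_fin_coeff_mul_eq_eval_one_derivative (hp : p.natDegree < n) :
    ∑ j : Fin n, p.coeff j * j = (derivative p).eval 1 := by
  rw [derivative_eval, sum_over_range' _ (fun _ => by simp) n hp,
    Fin.sum_univ_eq_sum_range (fun j => p.coeff j * j)]
  simp

theorem sum_fin_coeff_mul_succ_sub (hp : p.natDegree < n) (c : R) :
    ∑ j : Fin n, p.coeff j * (((j + 1 : ℕ) : R) - c) =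
      (derivative p).eval 1 + (1 - c) * p.eval 1 := by
  rw [← sum_fin_coeff_mul_eq_eval_one_derivative hp, ← sum_fin_coeff_eq_eval_one hp, mul_sum,
    ← sum_add_distrib]
  refine sum_congr rfl fun j _ => ?_
  push_cast
  ring

end Polynomial

namespace Lagrange

variable {F ι : Type*} [Field F] [DecidableEq ι] {s : Finset ι} {v : ι → F} {i k : ι}

theorem derivative_basisDivisor (a b : F) : derivative (basisDivisor a b) = C (a - b)⁻¹ := by
  simp [basisDivisor]

theorem natDegree_basis_lt_card (hvs : Set.InjOn v s) (hi : i ∈ s) :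
    (Lagrange.basis s v i).natDegree < #s := by
  rw [natDegree_basis hvs hi]
  exact Nat.sub_one_lt_of_lt (card_pos.2 ⟨i, hi⟩)

theorem eval_derivative_basis_of_ne (hk : k ∈ s) (hki : k ≠ i) :
    (derivative (Lagrange.basis s v i)).eval (v k) =
      (∏ m ∈ (s.erase i).erase k, (v k - v m)) / ∏ m ∈ s.erase i, (v i - v m) := by
  have hk' : k ∈ s.erase i := mem_erase.2 ⟨hki, hk⟩
  rw [Lagrange.basis, derivative_prod_finset, eval_finsetSum, sum_eq_single_of_mem k hk']
  · simp only [eval_mul, eval_prod, derivative_basisDivisor, eval_C]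
    simp only [basisDivisor, eval_mul, eval_C, eval_sub, eval_X]
    rw [← mul_prod_erase _ (fun m => v i - v m) hk', prod_mul_distrib, prod_inv_distrib,
      div_eq_mul_inv, mul_inv]
    ring
  · intro m _ hmk
    rw [eval_mul, eval_prod, prod_eq_zero (mem_erase.2 ⟨hmk.symm, hk'⟩) eval_basisDivisor_right,
      zero_mul]

end Lagrange

namespace Matrix

variable {F : Type*} [Field F] {n : ℕ} {v : Fin n → F}

theorem isUnit_vandermonde_transpose (hv : Function.Injective v) : IsUnit (vandermonde v)ᵀ := by
  rw [isUnit_iff_isUnit_det, det_transpose, isUnit_iff_ne_zero, det_vandermonde_ne_zero_iff]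
  exact hv

theorem vandermonde_transpose_inv_apply (hv : Function.Injective v) (i j : Fin n) :
    ((vandermonde v)ᵀ)⁻¹ i j = (Lagrange.basis univ v i).coeff j := by
  have hvs : Set.InjOn v (univ : Finset (Fin n)) := hv.injOn
  have hdeg (i : Fin n) : (Lagrange.basis univ v i).natDegree < n := by
    simpa using Lagrange.natDegree_basis_lt_card hvs (mem_univ i)
  suffices h : of (fun i j : Fin n => (Lagrange.basis univ v i).coeff j) * (vandermonde v)ᵀ = 1 by
    rw [inv_eq_left_inv h, of_apply]
  ext i j
  rw [mul_apply]
  simp only [of_apply, transpose_apply, vandermonde_apply]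
  rw [Fin.sum_univ_eq_sum_range (fun k => (Lagrange.basis univ v i).coeff k * v j ^ k),
    ← eval_eq_sum_range' (hdeg i)]
  obtain rfl | hij := eq_or_ne i j
  · rw [Lagrange.eval_basis_self hvs (mem_univ i), one_apply_eq]
  · rw [Lagrange.eval_basis_of_ne hij (mem_univ j), one_apply_ne hij]

end Matrix

theorem stmt1 (K : Type*) [Field K] (N : ℕ) (hN : 2 ≤ N) (x : Fin N → K)
    (hx : Function.Injective x) (hlast : x ⟨N - 1, by omega⟩ = 1) :
    IsUnit ((Matrix.vandermonde x)ᵀ) ∧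
    ∀ i : Fin N, (i : ℕ) < N - 1 → ∀ c : K,
      ∑ j : Fin N, ((Matrix.vandermonde x)ᵀ)⁻¹ i j * ((((j : ℕ) + 1 : ℕ) : K) - c) =
        (∏ m ∈ (Finset.univ.erase (⟨N - 1, by omega⟩ : Fin N)).erase i, (1 - x m)) /
          (∏ m ∈ Finset.univ.erase i, (x i - x m)) := by
  refine ⟨isUnit_vandermonde_transpose hx, fun i hi c => ?_⟩
  set last : Fin N := ⟨N - 1, by omega⟩
  have hlast_ne : last ≠ i := Fin.ne_of_val_ne (by simp only [last]; omega)
  have hdeg : (Lagrange.basis univ x i).natDegree < N := by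
    simpa using Lagrange.natDegree_basis_lt_card hx.injOn (mem_univ i)
  have heval : (Lagrange.basis univ x i).eval 1 = 0 := by
    rw [← hlast, Lagrange.eval_basis_of_ne hlast_ne.symm (mem_univ last)]
  have hderiv := Lagrange.eval_derivative_basis_of_ne (v := x) (mem_univ last) hlast_ne
  rw [hlast] at hderiv
  simp_rw [vandermonde_transpose_inv_apply hx]
  rw [sum_fin_coeff_mul_succ_sub hdeg, heval, mul_zero, add_zero, hderiv, erase_right_comm]
end

section
/- Let p be an odd prime, q a power of p (viewed as a real number), and let n ≥ 1 and k ≥ 0 be integers. Let ℛ_n^{0k} denote the finite set of weakly decreasing integer tuples λ = (λ_1, …, λ_n) with k ≥ λ_1 ≥ … ≥ λ_n ≥ 0, and for λ, μ ∈ ℛ_n^{0k} set 𝓑_λ(μ) := ∑_{1 ≤ i, j ≤ n} min(λ_i, μ_j). Then the square matrix ((-q)^{𝓑_λ(μ)})_{λ, μ ∈ ℛ_n^{0k}} is invertible; equivalently, the functions G_λ : ℛ_n^{0k} → ℝ, G_λ(μ) = (-q)^{𝓑_λ(μ)}, for λ ∈ ℛ_n^{0k}, are linearly independent. -/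
/- Lemma 3.2: invertibility of the matrix ((-q)^{𝓑_λ(μ)}) indexed by weakly decreasing
tuples in [0,k]^n, equivalently linear independence of the functions G_λ. -/

/-- Weakly decreasing integer tuples λ with k ≥ λ_1 ≥ … ≥ λ_n ≥ 0
(encoded with values in `Fin (k+1)`). -/
abbrev R0k (n k : ℕ) : Type :=
  {f : Fin n → Fin (k + 1) // ∀ i j : Fin n, i ≤ j → f j ≤ f i}

/-- 𝓑_λ(μ) = ∑_{1 ≤ i, j ≤ n} min(λ_i, μ_j). -/
def Bsum {n k : ℕ} (l m : R0k n k) : ℕ :=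
  ∑ i : Fin n, ∑ j : Fin n, min ((l.1 i : ℕ)) ((m.1 j : ℕ))

/-!
Passing to conjugate partitions turns `𝓑_λ(μ)` into the dot product `λ' ⬝ᵥ μ'` of antitone
tuples in `[0, n]^k`, so the rows of the matrix are the monomials `z ^ λ'` evaluated at the
nodes `x ^ μ' = (x ^ μ'_1, …, x ^ μ'_k)`, where `x = -q`. It remains to show that a polynomial
`f` whose exponents are antitone and bounded by `N` and which vanishes at all such nodes is
zero. Viewing `f` as a polynomial in `z_1`, its specialisation `z_1 = x ^ N` vanishes at the nodes
in one variable fewer, so by induction on `k` it is zero and `f = (z_1 - x ^ N) g`. The quotient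
`g` again has antitone exponents, now bounded by `N - 1`, and vanishes at the nodes with
`μ_1 ≤ N - 1` because `x ^ μ_1 ≠ x ^ N` there; induction on `N` gives `g = 0`.
-/

open Finset MvPolynomial Function

def antitoneTuples (k N : ℕ) : Set (Fin k → ℕ) := {a | Antitone a ∧ ∀ i, a i ≤ N}

lemma antitoneTuples_mono {k N N' : ℕ} (h : N ≤ N') : antitoneTuples k N ⊆ antitoneTuples k N' :=
  fun _ ha => ⟨ha.1, fun i => (ha.2 i).trans h⟩

lemma zero_mem_antitoneTuples (k N : ℕ) : (0 : Fin k → ℕ) ∈ antitoneTuples k N :=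
  ⟨antitone_const, fun _ => Nat.zero_le N⟩

lemma cons_mem_antitoneTuples {k N t : ℕ} {b : Fin k → ℕ} :
    (Fin.cons t b : Fin (k + 1) → ℕ) ∈ antitoneTuples (k + 1) N ↔
      t ≤ N ∧ b ∈ antitoneTuples k t := by
  constructor
  · rintro ⟨hanti, hle⟩
    refine ⟨hle 0, fun i j hij => hanti (Fin.succ_le_succ_iff.mpr hij), fun i => ?_⟩
    simpa using hanti (Fin.zero_le i.succ)
  · rintro ⟨htN, hanti, hle⟩
    refine ⟨fun i j hij => ?_, Fin.cases htN fun i => (hle i).trans htN⟩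
    cases j using Fin.cases with
    | zero => rw [Fin.le_zero_iff.mp hij]
    | succ j =>
      cases i using Fin.cases with
      | zero => exact hle j
      | succ i => exact hanti (Fin.succ_le_succ_iff.mp hij)

lemma MvPolynomial.eq_zero_of_support_zero {σ R : Type*} [CommSemiring R] {f : MvPolynomial σ R}
    (hf : ∀ a ∈ f.support, a = 0) (z : σ → R) (h : eval z f = 0) : f = 0 := by
  have hC : f = C (f.coeff 0) :=
    totalDegree_eq_zero_iff_eq_C.mp <| (totalDegree_eq_zero_iff _ f).mpr fun a ha i => by
      simp [hf a ha]
  rw [hC, eval_C] at h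
  rw [hC, h, map_zero]

lemma MvPolynomial.coeff_coeff_eq_zero_of_eq_X_sub_C_mul {σ R : Type*} [CommRing R] [IsDomain R]
    {r : R} (hr : r ≠ 0) {F Q : Polynomial (MvPolynomial σ R)}
    (hFQ : F = (Polynomial.X - Polynomial.C (C r)) * Q) (b : σ →₀ ℕ) (s : ℕ)
    (hF : ∀ t ≤ s, (F.coeff t).coeff b = 0) : (Q.coeff s).coeff b = 0 := by
  induction s with
  | zero =>
    have h := hF 0 le_rfl
    simp only [hFQ, Polynomial.mul_coeff_zero, Polynomial.coeff_sub, Polynomial.coeff_X_zero,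
      Polynomial.coeff_C_zero, zero_sub, neg_mul, coeff_neg, coeff_C_mul, neg_eq_zero] at h
    exact (mul_eq_zero.mp h).resolve_left hr
  | succ s ih =>
    have h := hF (s + 1) le_rfl
    rw [hFQ, Polynomial.coeff_X_sub_C_mul, coeff_sub, coeff_C_mul,
      ih fun t ht => hF t (ht.trans s.le_succ), zero_sub, neg_eq_zero] at h
    exact (mul_eq_zero.mp h).resolve_left hr

lemma MvPolynomial.eval_eval_C_finSuccEquiv {R : Type*} [CommRing R] {k : ℕ}
    (f : MvPolynomial (Fin (k + 1)) R) (s : Fin k → R) (y : R) :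
    eval s ((finSuccEquiv R k f).eval (C y)) = eval (Fin.cons y s) f := by
  rw [eval_eq_eval_mv_eval', Polynomial.eval_map, ← Polynomial.eval₂_hom, eval_C]

lemma MvPolynomial.eval_pow_comp_monomial {R : Type*} [CommSemiring R] (x : R) {k : ℕ}
    (a μ : Fin k → ℕ) (c : R) :
    eval ((x ^ ·) ∘ μ) (monomial (Finsupp.equivFunOnFinite.symm a) c) = c * x ^ (a ⬝ᵥ μ) := by
  rw [eval_monomial, Finsupp.prod_fintype _ _ fun _ => pow_zero _]
  simp only [Finsupp.coe_equivFunOnFinite_symm, comp_apply, ← pow_mul, prod_pow_eq_pow_sum]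
  rw [← dotProduct, dotProduct_comm]

section Unisolvence

variable {R : Type*} [CommRing R]

def AntitonePowUnisolvent (x : R) (k N : ℕ) : Prop :=
  ∀ f : MvPolynomial (Fin k) R, (∀ a ∈ f.support, ⇑a ∈ antitoneTuples k N) →
    (∀ μ ∈ antitoneTuples k N, eval ((x ^ ·) ∘ μ) f = 0) → f = 0

lemma antitonePowUnisolvent_of_forall_eq_zero {x : R} {k N : ℕ}
    (h : ∀ a ∈ antitoneTuples k N, a = 0) : AntitonePowUnisolvent x k N :=
  fun _ hf hfx => eq_zero_of_support_zero (fun a ha => DFunLike.coe_injective (h _ (hf a ha))) _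
    (hfx 0 (zero_mem_antitoneTuples k N))

lemma coeff_coeff_finSuccEquiv_eq_zero {k N : ℕ} {f : MvPolynomial (Fin (k + 1)) R}
    (hf : ∀ a ∈ f.support, ⇑a ∈ antitoneTuples (k + 1) N) {t : ℕ} {b : Fin k →₀ ℕ}
    (h : Fin.cons t ⇑b ∉ antitoneTuples (k + 1) N) :
    ((finSuccEquiv R k f).coeff t).coeff b = 0 := by
  rw [finSuccEquiv_coeff_coeff, ← notMem_support_iff]
  exact fun ha => h (hf _ ha)

lemma isRoot_finSuccEquiv {x : R} {k N : ℕ} (ih : AntitonePowUnisolvent x k N)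
    {f : MvPolynomial (Fin (k + 1)) R} (hf : ∀ a ∈ f.support, ⇑a ∈ antitoneTuples (k + 1) N)
    (hfx : ∀ μ ∈ antitoneTuples (k + 1) N, eval ((x ^ ·) ∘ μ) f = 0) :
    (finSuccEquiv R k f).IsRoot (C (x ^ N)) := by
  apply ih
  · intro b hb
    by_contra hbN
    refine mem_support_iff.mp hb ?_
    rw [Polynomial.eval_eq_sum_range, coeff_sum]
    refine sum_eq_zero fun t _ => ?_
    rw [← map_pow, mul_comm, coeff_C_mul, coeff_coeff_finSuccEquiv_eq_zero hf, mul_zero]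
    intro htb
    obtain ⟨htN, hbt⟩ := cons_mem_antitoneTuples.mp htb
    exact hbN (antitoneTuples_mono htN hbt)
  · intro w hw
    rw [eval_eval_C_finSuccEquiv, ← Fin.comp_cons]
    exact hfx _ (cons_mem_antitoneTuples.mpr ⟨le_rfl, hw⟩)

variable [IsDomain R]

lemma cons_mem_antitoneTuples_of_coeff_coeff_ne_zero {k N : ℕ} {r : R} (hr : r ≠ 0)
    {f : MvPolynomial (Fin (k + 1)) R} (hf : ∀ a ∈ f.support, ⇑a ∈ antitoneTuples (k + 1) (N + 1))
    {Q : Polynomial (MvPolynomial (Fin k) R)}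
    (hFQ : finSuccEquiv R k f = (Polynomial.X - Polynomial.C (C r)) * Q) {s : ℕ}
    {b : Fin k →₀ ℕ} (hsb : (Q.coeff s).coeff b ≠ 0) :
    Fin.cons s ⇑b ∈ antitoneTuples (k + 1) N := by
  refine cons_mem_antitoneTuples.mpr ⟨?_, ?_⟩
  · have hQ : Q ≠ 0 := fun h => hsb (by rw [h, Polynomial.coeff_zero, coeff_zero])
    have hF : (finSuccEquiv R k f).natDegree ≤ N + 1 := by
      rw [natDegree_finSuccEquiv, degreeOf_le_iff]
      exact fun a ha => (hf a ha).2 0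
    rw [hFQ, (Polynomial.monic_X_sub_C _).natDegree_mul' hQ, Polynomial.natDegree_X_sub_C] at hF
    have := Polynomial.le_natDegree_of_ne_zero fun h => hsb (by rw [h, coeff_zero])
    omega
  · by_contra hbs
    refine hsb (coeff_coeff_eq_zero_of_eq_X_sub_C_mul hr hFQ b s fun t hts => ?_)
    refine coeff_coeff_finSuccEquiv_eq_zero hf fun htb => hbs ?_
    exact antitoneTuples_mono hts (cons_mem_antitoneTuples.mp htb).2

lemma antitonePowUnisolvent_succ_succ {x : R} (hx : Injective (x ^ · : ℕ → R)) {k N : ℕ}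
    (ihk : AntitonePowUnisolvent x k (N + 1)) (ihN : AntitonePowUnisolvent x (k + 1) N) :
    AntitonePowUnisolvent x (k + 1) (N + 1) := by
  intro f hf hfx
  set F := finSuccEquiv R k f with hF
  have hxN : x ^ (N + 1) ≠ 0 :=
    pow_ne_zero _ fun h0 => absurd (hx (show x ^ 1 = x ^ 2 by simp [h0])) (by norm_num)
  set Q := F /ₘ (Polynomial.X - Polynomial.C (C (x ^ (N + 1))))
  have hFQ : F = (Polynomial.X - Polynomial.C (C (x ^ (N + 1)))) * Q :=
    (Polynomial.mul_divByMonic_eq_iff_isRoot.mpr (isRoot_finSuccEquiv ihk hf hfx)).symm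
  suffices (finSuccEquiv R k).symm Q = 0 by
    rwa [← (finSuccEquiv R k).apply_symm_apply Q, this, map_zero, mul_zero,
      EmbeddingLike.map_eq_zero_iff] at hFQ
  refine ihN _ (fun a ha => ?_) fun μ hμ => ?_
  · rw [← Finsupp.cons_tail a] at ha ⊢
    rw [mem_support_iff, ← finSuccEquiv_coeff_coeff, AlgEquiv.apply_symm_apply] at ha
    exact cons_mem_antitoneTuples_of_coeff_coeff_ne_zero hxN hf hFQ ha
  · obtain ⟨m, w, rfl⟩ : ∃ m w, μ = Fin.cons m w :=
      ⟨μ 0, Fin.tail μ, (Fin.cons_self_tail μ).symm⟩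
    have hm := (cons_mem_antitoneTuples.mp hμ).1
    have h := hfx _ (antitoneTuples_mono N.le_succ hμ)
    rw [Fin.comp_cons, eval_eq_eval_mv_eval', ← hF, hFQ, Polynomial.map_mul,
      Polynomial.eval_mul] at h
    rw [Fin.comp_cons, eval_eq_eval_mv_eval', AlgEquiv.apply_symm_apply]
    refine (mul_eq_zero.mp h).resolve_left ?_
    simp only [Polynomial.map_sub, Polynomial.map_X, Polynomial.map_C, eval_C,
      Polynomial.eval_sub, Polynomial.eval_X, Polynomial.eval_C, sub_ne_zero]
    exact fun hxm => absurd (hx hxm) (by omega)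

theorem antitonePowUnisolvent {x : R} (hx : Injective (x ^ · : ℕ → R)) (k N : ℕ) :
    AntitonePowUnisolvent x k N := by
  induction k generalizing N with
  | zero => exact antitonePowUnisolvent_of_forall_eq_zero fun _ _ => Subsingleton.elim _ _
  | succ k ihk =>
    induction N with
    | zero =>
      exact antitonePowUnisolvent_of_forall_eq_zero fun a ha =>
        funext fun i => Nat.le_zero.mp (ha.2 i)
    | succ N ihN => exact antitonePowUnisolvent_succ_succ hx (ihk _) ihN

theorem linearIndependent_pow_dotProduct {x : R} (hx : Injective (x ^ · : ℕ → R))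
    {ι : Type*} [Fintype ι] {k N : ℕ} {φ : ι → Fin k → ℕ} (hφ : Injective φ)
    (hrange : Set.range φ = antitoneTuples k N) :
    LinearIndependent R fun i j => x ^ (φ i ⬝ᵥ φ j) := by
  classical
  rw [Fintype.linearIndependent_iff]
  intro g hg i
  set f : MvPolynomial (Fin k) R := ∑ j, monomial (Finsupp.equivFunOnFinite.symm (φ j)) (g j)
  have hf : f = 0 := by
    refine antitonePowUnisolvent hx k N f (fun a ha => ?_) ?_
    · obtain ⟨j, -, hj⟩ := mem_biUnion.mp (support_sum ha)
      rw [mem_singleton.mp (support_monomial_subset hj), ← hrange]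
      exact ⟨j, rfl⟩
    · rw [← hrange]
      rintro _ ⟨j, rfl⟩
      simpa [f, eval_pow_comp_monomial, dotProduct_comm] using congrFun hg j
  simpa [f, coeff_sum, coeff_monomial, hφ.eq_iff] using
    congrArg (coeff (Finsupp.equivFunOnFinite.symm (φ i))) hf

end Unisolvence

def conjugate {n : ℕ} (m : ℕ) (f : Fin n → ℕ) : Fin m → ℕ := fun t => #{i | (t : ℕ) < f i}

lemma conjugate_mem_antitoneTuples {n : ℕ} (m : ℕ) (f : Fin n → ℕ) :
    conjugate m f ∈ antitoneTuples m n :=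
  ⟨fun _ _ htt' => card_le_card (monotone_filter_right _ fun _ _ h => lt_of_le_of_lt htt' h),
    fun _ => (card_filter_le _ _).trans_eq (card_fin n)⟩

lemma lt_conjugate_iff {n m : ℕ} {f : Fin n → ℕ} (hf : Antitone f) (i : Fin n) (t : Fin m) :
    (i : ℕ) < conjugate m f t ↔ (t : ℕ) < f i :=
  Tuple.lt_card_gt_iff_apply_gt_of_antitone hf

lemma conjugate_conjugate {n m : ℕ} {f : Fin n → ℕ} (hf : Antitone f) (hfm : ∀ i, f i ≤ m) :
    conjugate n (conjugate m f) = f := by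
  funext i
  change #{t : Fin m | (i : ℕ) < conjugate m f t} = f i
  rw [filter_congr fun t _ => lt_conjugate_iff hf i t, Fin.card_filter_val_lt,
    min_eq_right (hfm i)]

lemma sum_sum_min_eq_conjugate_dotProduct {n m : ℕ} {f g : Fin n → ℕ} (hf : ∀ i, f i ≤ m) :
    ∑ i, ∑ j, min (f i) (g j) = conjugate m f ⬝ᵥ conjugate m g := by
  have hmin : ∀ i j, min (f i) (g j) =
      ∑ t : Fin m, if (t : ℕ) < f i ∧ (t : ℕ) < g j then 1 else 0 := by
    intro i j
    rw [sum_boole, Nat.cast_id]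
    simp_rw [← lt_min_iff]
    rw [Fin.card_filter_val_lt, min_eq_right ((min_le_left _ _).trans (hf i))]
  simp only [hmin, dotProduct, conjugate, card_filter, sum_mul_sum, ite_zero_mul_ite_zero,
    mul_one]
  rw [eq_comm, sum_comm]
  refine sum_congr rfl fun _ _ => ?_
  exact sum_comm

namespace R0k

variable {n k : ℕ}

def conj (l : R0k n k) : Fin k → ℕ := conjugate k fun i => (l.1 i : ℕ)

lemma antitone_val (l : R0k n k) : Antitone fun i => (l.1 i : ℕ) := fun i j h => l.2 i j h

lemma conj_injective : Injective (conj : R0k n k → Fin k → ℕ) := by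
  intro l l' h
  have h' := congrArg (conjugate n) h
  rw [conj, conj, conjugate_conjugate l.antitone_val fun i => (l.1 i).is_le,
    conjugate_conjugate l'.antitone_val fun i => (l'.1 i).is_le] at h'
  exact Subtype.ext (funext fun i => Fin.ext (congrFun h' i))

lemma range_conj : Set.range (conj : R0k n k → Fin k → ℕ) = antitoneTuples k n := by
  refine Set.Subset.antisymm (Set.range_subset_iff.mpr fun l => conjugate_mem_antitoneTuples _ _)
    fun a ha => ?_
  have ha' := conjugate_mem_antitoneTuples n a
  refine ⟨⟨fun i => ⟨conjugate n a i, Nat.lt_succ_of_le (ha'.2 i)⟩, fun i j h => ha'.1 h⟩, ?_⟩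
  exact conjugate_conjugate ha.1 ha.2

lemma Bsum_eq_conj_dotProduct (l m : R0k n k) : Bsum l m = l.conj ⬝ᵥ m.conj :=
  sum_sum_min_eq_conjugate_dotProduct fun i => (l.1 i).is_le

end R0k

theorem linearIndependent_pow_Bsum {R : Type*} [CommRing R] [IsDomain R] {x : R}
    (hx : Injective (x ^ · : ℕ → R)) (n k : ℕ) :
    LinearIndependent R fun l m : R0k n k => x ^ Bsum l m := by
  simpa only [R0k.Bsum_eq_conj_dotProduct] using
    linearIndependent_pow_dotProduct hx R0k.conj_injective R0k.range_conj

theorem stmt2_general (p : ℕ) (hp : Nat.Prime p) (r : ℕ) (hr : 1 ≤ r)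
    (q : ℝ) (hq : q = (p : ℝ) ^ r) (n k : ℕ) :
    IsUnit (Matrix.of fun l m : R0k n k => (-q) ^ Bsum l m) ∧
    LinearIndependent ℝ (fun l : R0k n k => fun m : R0k n k => (-q) ^ Bsum l m) := by
  have hq1 : 1 < q := by
    rw [hq]
    exact one_lt_pow₀ (by exact_mod_cast hp.one_lt) (by omega)
  have hq0 : 0 < q := zero_lt_one.trans hq1
  have hx : Injective ((-q) ^ · : ℕ → ℝ) := fun a b h =>
    pow_right_injective₀ hq0 hq1.ne' (by simpa [abs_pow, abs_of_pos hq0] using congrArg abs h)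
  have hli := linearIndependent_pow_Bsum hx n k
  exact ⟨Matrix.linearIndependent_rows_iff_isUnit.mp hli, hli⟩

theorem stmt2 (p : ℕ) (hp : Nat.Prime p) (hodd : Odd p) (r : ℕ) (hr : 1 ≤ r)
    (q : ℝ) (hq : q = (p : ℝ) ^ r) (n k : ℕ) (hn : 1 ≤ n) :
    IsUnit (Matrix.of fun l m : R0k n k => (-q) ^ Bsum l m) ∧
    LinearIndependent ℝ (fun l : R0k n k => fun m : R0k n k => (-q) ^ Bsum l m) :=
  stmt2_general p hp r hr q hq n k
end

section
/- Let q > 1 be a real number, n ≥ 2 an integer, and k ≥ 1 an integer. For weakly decreasing tuples λ̄ = (λ̄_1, …, λ̄_{n-1}) and μ̄ = (μ̄_1, …, μ̄_{n-1}) of integers in [0, k], write λ = (k, λ̄_1, …, λ̄_{n-1}) and μ = (k, μ̄_1, …, μ̄_{n-1}). Then ∑_{1 ≤ i, j ≤ n} min(λ_i, μ_j) = k + ∑_{i=1}^{n-1} λ̄_i + ∑_{j=1}^{n-1} μ̄_j + ∑_{1 ≤ i, j ≤ n-1} min(λ̄_i, μ̄_j). Consequently, the square matrix ((-q)^{∑_{i,j}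 min(λ_i, μ_j)}) indexed by the set of weakly decreasing tuples in [0,k]^n whose first entry equals k is invertible if and only if the square matrix ((-q)^{∑_{i,j} min(λ̄_i, μ̄_j)}) indexed by all weakly decreasing tuples in [0,k]^{n-1} is invertible, since the former equals (-q)^k · X^T M X where M is the latter and X is the invertible diagonal matrix with entries (-q)^{∑_i λ̄_i}. -/
open Matrix

/-- The tuple λ = (k, λ̄_1, …, λ̄_{n-1}) obtained by prepending k to a tuple of length n-1. -/
def consk (n k : ℕ) (f : Fin (n - 1) → ℕ) : Fin n → ℕ := fun i =>
  if (i : ℕ) = 0 then k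
  else if h : (i : ℕ) - 1 < n - 1 then f ⟨(i : ℕ) - 1, h⟩ else 0

/-- The matrix ((-q)^{∑ min(λ_i, μ_j)}) indexed by weakly decreasing tuples in [0,k]^n whose
first entry is k (identified with weakly decreasing tuples in [0,k]^{n-1}). -/
noncomputable def Mtop (q : ℝ) (n k : ℕ) : Matrix (R0k (n - 1) k) (R0k (n - 1) k) ℝ :=
  Matrix.of fun a b =>
    (-q) ^ (∑ i : Fin n, ∑ j : Fin n,
      min (consk n k (fun t => (a.1 t : ℕ)) i) (consk n k (fun t => (b.1 t : ℕ)) j))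

/-- The matrix ((-q)^{∑ min(λ̄_i, μ̄_j)}) indexed by weakly decreasing tuples in [0,k]^{n-1}. -/
noncomputable def Msub (q : ℝ) (n k : ℕ) : Matrix (R0k (n - 1) k) (R0k (n - 1) k) ℝ :=
  Matrix.of fun a b => (-q) ^ (Bsum a b)

/-- The invertible diagonal matrix with entries (-q)^{∑_i λ̄_i}. -/
noncomputable def Xdiag (q : ℝ) (n k : ℕ) : Matrix (R0k (n - 1) k) (R0k (n - 1) k) ℝ :=
  Matrix.diagonal fun a => (-q) ^ (∑ i, (a.1 i : ℕ))


lemma consk_zero (m k : ℕ) (f : Fin m → ℕ) : consk (m + 1) k f 0 = k := by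
  simp [consk]

lemma consk_succ (m k : ℕ) (f : Fin m → ℕ) (i : Fin m) :
    consk (m + 1) k f i.succ = f i := by
  simp [consk, Fin.val_succ]

lemma key_sum (m k : ℕ) (lb mb : Fin m → ℕ) (hlk : ∀ i, lb i ≤ k) (hmk : ∀ i, mb i ≤ k) :
    ∑ i : Fin (m + 1), ∑ j : Fin (m + 1),
        min (consk (m + 1) k lb i) (consk (m + 1) k mb j)
      = k + (∑ i, lb i) + (∑ j, mb j) + ∑ i : Fin m, ∑ j : Fin m, min (lb i) (mb j) := by
  simp only [Fin.sum_univ_succ, consk_zero, consk_succ, min_self]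
  have h1 : ∑ j, min k (mb j) = ∑ j, mb j :=
    Finset.sum_congr rfl fun j _ => min_eq_right (hmk j)
  have h2 : ∑ i : Fin m, (min (lb i) k + ∑ j, min (lb i) (mb j))
      = ∑ i : Fin m, (lb i + ∑ j, min (lb i) (mb j)) :=
    Finset.sum_congr rfl fun i _ => by rw [min_eq_left (hlk i)]
  rw [h1, h2, Finset.sum_add_distrib]
  ring

theorem stmt4 (q : ℝ) (hq : 1 < q) (n k : ℕ) (hn : 2 ≤ n) (hk : 1 ≤ k) :
    (∀ lb mb : Fin (n - 1) → ℕ,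
      (∀ i j : Fin (n - 1), i ≤ j → lb j ≤ lb i) → (∀ i, lb i ≤ k) →
      (∀ i j : Fin (n - 1), i ≤ j → mb j ≤ mb i) → (∀ i, mb i ≤ k) →
      ∑ i : Fin n, ∑ j : Fin n, min (consk n k lb i) (consk n k mb j)
        = k + (∑ i, lb i) + (∑ j, mb j)
          + ∑ i : Fin (n - 1), ∑ j : Fin (n - 1), min (lb i) (mb j)) ∧
    Mtop q n k = (-q) ^ k • ((Xdiag q n k)ᵀ * Msub q n k * Xdiag q n k) ∧
    IsUnit (Xdiag q n k) ∧
    (IsUnit (Mtop q n k) ↔ IsUnit (Msub q n k)) := by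
  obtain ⟨m, rfl⟩ : ∃ m, n = m + 1 := ⟨n - 1, (Nat.succ_pred_eq_of_pos (by omega)).symm⟩
  have hm : m + 1 - 1 = m := rfl
  have hqne : (-q : ℝ) ≠ 0 := by intro h; nlinarith
  have hsum : ∀ lb mb : Fin m → ℕ,
      (∀ i j : Fin m, i ≤ j → lb j ≤ lb i) → (∀ i, lb i ≤ k) →
      (∀ i j : Fin m, i ≤ j → mb j ≤ mb i) → (∀ i, mb i ≤ k) →
      ∑ i : Fin (m + 1), ∑ j : Fin (m + 1),
          min (consk (m + 1) k lb i) (consk (m + 1) k mb j)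
        = k + (∑ i, lb i) + (∑ j, mb j) + ∑ i : Fin m, ∑ j : Fin m, min (lb i) (mb j) :=
    fun lb mb _ h2 _ h4 => key_sum m k lb mb h2 h4
  have hEq : Mtop q (m + 1) k = (-q) ^ k • ((Xdiag q (m + 1) k)ᵀ * Msub q (m + 1) k * Xdiag q (m + 1) k) := by
    ext a b
    have hb1 : ∀ i, ((a.1 i : ℕ)) ≤ k := fun i => Nat.lt_succ_iff.mp (a.1 i).isLt
    have hb2 : ∀ i, ((b.1 i : ℕ)) ≤ k := fun i => Nat.lt_succ_iff.mp (b.1 i).isLt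
    have hBs : Bsum a b = ∑ i : Fin m, ∑ j : Fin m, min ((a.1 i : ℕ)) ((b.1 j : ℕ)) := rfl
    have := key_sum m k (fun t => (a.1 t : ℕ)) (fun t => (b.1 t : ℕ)) hb1 hb2
    simp only [Mtop, Msub, Xdiag, Matrix.smul_apply, Matrix.diagonal_transpose,
      Matrix.mul_diagonal, Matrix.diagonal_mul, Matrix.of_apply, smul_eq_mul]
    show (-q) ^ (∑ i : Fin (m + 1), ∑ j : Fin (m + 1),
        min (consk (m + 1) k (fun t : Fin m => (a.1 t : ℕ)) i)
            (consk (m + 1) k (fun t : Fin m => (b.1 t : ℕ)) j))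
      = (-q) ^ k * (((-q) ^ ∑ t : Fin m, ((a.1 t : ℕ))) * (-q) ^ Bsum a b
          * (-q) ^ ∑ t : Fin m, ((b.1 t : ℕ)))
    rw [this, hBs]
    ring
  have hXdet : Matrix.det (Xdiag q (m + 1) k) ≠ 0 := by
    rw [Xdiag, Matrix.det_diagonal]
    exact Finset.prod_ne_zero_iff.mpr fun a _ => pow_ne_zero _ hqne
  have hXunit : IsUnit (Xdiag q (m + 1) k) := by
    rw [Matrix.isUnit_iff_isUnit_det, isUnit_iff_ne_zero]
    exact hXdet
  refine ⟨hsum, hEq, hXunit, ?_⟩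
  rw [Matrix.isUnit_iff_isUnit_det, Matrix.isUnit_iff_isUnit_det, hEq,
    Matrix.det_smul, Matrix.det_mul, Matrix.det_mul, Matrix.det_transpose,
    isUnit_iff_ne_zero, isUnit_iff_ne_zero]
  constructor
  · intro h hM; apply h; rw [hM]; ring
  · intro h
    have h1 : ((-q) ^ k : ℝ) ^ Fintype.card (R0k m k) ≠ 0 :=
      pow_ne_zero _ (pow_ne_zero _ hqne)
    exact mul_ne_zero h1 (mul_ne_zero (mul_ne_zero hXdet h) hXdet)
end

section
/- Let q > 1 be a real number and n ≥ 1 an integer. For 0 ≤ l ≤ 2n, let 𝔐_l be the (l+1)×(l+1) real matrix with (i, s)-entry (-q)^{s(2n-i)} (0 ≤ i, s ≤ l), and let d_{i,l} (0 ≤ i ≤ l) be the components of the unique solution of 𝔐_l d = (0, …, 0, 1)^T. Then for every 0 ≤ i ≤ l-1 one has d_{i+1,l} ≠ 0 and d_{i,l} / d_{i+1,l} = -(-q)^{n+1} · ((-q)^n - (-q)^{n-i-1}) / ((-q)^{l-i} - 1). -/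
/- Lemma 4.4, second part: the ratio formula d_{i,l}/d_{i+1,l}, where d is the unique
solution of 𝔐_l d = (0,…,0,1)ᵀ. -/

/-- The (l+1)×(l+1) matrix 𝔐_l with (i,s)-entry (-q)^{s(2n-i)}. -/
noncomputable def Mmat (q : ℝ) (n l : ℕ) : Matrix (Fin (l + 1)) (Fin (l + 1)) ℝ :=
  Matrix.of fun i s => (-q) ^ ((s : ℕ) * (2 * n - (i : ℕ)))

open Polynomial in
private lemma auxCoeff {l : ℕ} (e : Fin (l+1) → ℝ) (s : ℕ) (hs : s ≤ l) :
    (∑ t : Fin (l+1), C (e t) * X ^ (t:ℕ)).coeff s = e ⟨s, by omega⟩ := by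
  rw [finset_sum_coeff, Finset.sum_eq_single (⟨s, by omega⟩ : Fin (l+1))]
  · simp
  · intro t _ ht
    have : s ≠ (t:ℕ) := fun h => ht (by simp [Fin.ext_iff, ← h])
    simp [coeff_X_pow, this]
  · simp

open Polynomial in
private lemma auxCoeffHi {l : ℕ} (e : Fin (l+1) → ℝ) (s : ℕ) (hs : l < s) :
    (∑ t : Fin (l+1), C (e t) * X ^ (t:ℕ)).coeff s = 0 := by
  rw [finset_sum_coeff]
  apply Finset.sum_eq_zero
  intro t _
  have : s ≠ (t:ℕ) := by omega
  simp [coeff_X_pow, this]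

open Polynomial in
private lemma auxKey (y : ℝ) (n l : ℕ) (hl : l ≤ 2*n) :
    (∏ m ∈ Finset.range l, (X - C (y ^ (2*n - m)))).comp (C y * X) * (X - C (y ^ (2*n))) =
    C (y ^ l) * (∏ m ∈ Finset.range l, (X - C (y ^ (2*n - m)))) * (X - C (y ^ (2*n - l))) := by
  have hcomp : (∏ m ∈ Finset.range l, (X - C (y ^ (2*n - m)))).comp (C y * X)
      = C (y ^ l) * ∏ m ∈ Finset.range l, (X - C (y ^ (2*n - (m+1)))) := by
    rw [prod_comp]
    have : ∀ m ∈ Finset.range l, (X - C (y ^ (2*n - m))).comp (C y * X)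
        = C y * (X - C (y ^ (2*n - (m+1)))) := by
      intro m hm
      have hm' : m < l := Finset.mem_range.mp hm
      have : y * y ^ (2*n - (m+1)) = y ^ (2*n - m) := by
        rw [← pow_succ']
        congr 1
        omega
      rw [sub_comp, C_comp, X_comp, mul_sub, ← C_mul, this]
    rw [Finset.prod_congr rfl this, Finset.prod_mul_distrib]
    simp [Finset.prod_const]
  have hT : (∏ m ∈ Finset.range l, (X - C (y ^ (2*n - (m+1))))) * (X - C (y ^ (2*n))) =
      (∏ m ∈ Finset.range l, (X - C (y ^ (2*n - m)))) * (X - C (y ^ (2*n - l))) := by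
    have h1 := Finset.prod_range_succ (fun m => (X - C (y ^ (2*n - m))) : ℕ → ℝ[X]) l
    have h2 := Finset.prod_range_succ' (fun m => (X - C (y ^ (2*n - m))) : ℕ → ℝ[X]) l
    rw [← h1, h2]
    simp
  rw [hcomp, mul_assoc, hT, ← mul_assoc]

open Polynomial in
theorem stmt6 (q : ℝ) (hq : 1 < q) (n l : ℕ) (hn : 1 ≤ n) (hl : l ≤ 2 * n)
    (d : Fin (l + 1) → ℝ)
    (hd : (Mmat q n l).mulVec d = Pi.single (Fin.last l) 1) :
    ∀ i : ℕ, ∀ hi : i < l,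
      d ⟨i + 1, by omega⟩ ≠ 0 ∧
      d ⟨i, by omega⟩ / d ⟨i + 1, by omega⟩ =
        -(-q) ^ ((n : ℤ) + 1) *
          (((-q) ^ (n : ℤ) - (-q) ^ ((n : ℤ) - (i : ℤ) - 1)) /
            ((-q) ^ ((l : ℤ) - (i : ℤ)) - 1)) := by
  have hq0 : (0:ℝ) < q := lt_trans one_pos hq
  obtain ⟨y, hydef⟩ : ∃ y : ℝ, y = -q := ⟨-q, rfl⟩
  simp only [← hydef]
  have hy0 : y ≠ 0 := by rw [hydef]; intro h; nlinarith [neg_eq_zero.mp h]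
  have hyabs : |y| = q := by rw [hydef, abs_neg, abs_of_pos hq0]
  have hpow_ne : ∀ a b : ℕ, a ≠ b → y ^ a ≠ y ^ b := by
    intro a b hab h
    have h2 : |y| ^ a = |y| ^ b := by rw [← abs_pow, ← abs_pow, h]
    rw [hyabs] at h2
    exact hab ((pow_right_strictMono₀ hq).injective h2)
  set P : ℝ[X] := ∑ t : Fin (l+1), C (d t) * X ^ (t:ℕ) with hPdef
  have hPcoeff : ∀ s : ℕ, ∀ hs : s ≤ l, P.coeff s = d ⟨s, by omega⟩ := by
    intro s hs; exact auxCoeff d s hs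
  have hPdeg : P.natDegree ≤ l :=
    natDegree_le_iff_coeff_eq_zero.mpr fun N hN => auxCoeffHi d N hN
  have hEval : ∀ x : ℝ, P.eval x = ∑ t : Fin (l+1), d t * x ^ (t:ℕ) := by
    intro x
    rw [hPdef, eval_finset_sum]
    simp only [eval_mul, eval_C, eval_pow, eval_X]
  have hmv : ∀ j : Fin (l+1), P.eval (y ^ (2*n - (j:ℕ))) = (Pi.single (Fin.last l) 1 : Fin (l+1) → ℝ) j := by
    intro j
    have h := congrFun hd j
    rw [Matrix.mulVec, Mmat] at h
    rw [hEval, ← h]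
    apply Finset.sum_congr rfl
    intro t _
    simp only [Matrix.of_apply, dotProduct]
    rw [← pow_mul, mul_comm (2*n - (j:ℕ)) (t:ℕ), mul_comm, hydef]
  have hroot : ∀ m, m < l → P.eval (y ^ (2*n - m)) = 0 := by
    intro m hm
    have hne : (⟨m, by omega⟩ : Fin (l+1)) ≠ Fin.last l := by
      simp only [ne_eq, Fin.ext_iff, Fin.val_last]; omega
    have h := hmv ⟨m, by omega⟩
    rwa [Pi.single_eq_of_ne hne] at h
  have hlast : P.eval (y ^ (2*n - l)) = 1 := by
    have h := hmv (Fin.last l)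
    rwa [Pi.single_eq_same] at h
  have hP0 : P ≠ 0 := by
    intro h
    rw [h, eval_zero] at hlast
    exact one_ne_zero hlast.symm
  set G : ℝ[X] := ∏ m ∈ Finset.range l, (X - C (y ^ (2*n - m))) with hGdef
  have hGmonic : G.Monic := monic_prod_of_monic _ _ fun i _ => monic_X_sub_C _
  have hGdeg : G.natDegree = l := by
    rw [hGdef, natDegree_prod_of_monic _ _ fun i _ => monic_X_sub_C _]
    have h1 : ∀ m ∈ Finset.range l, (X - C (y ^ (2*n - m))).natDegree = 1 :=
      fun m _ => natDegree_X_sub_C _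
    rw [Finset.sum_congr rfl h1]
    simp
  have hGdvd : G ∣ P := by
    apply Finset.prod_dvd_of_coprime
    · intro a ha b hb hab
      simp only [Finset.coe_range, Set.mem_Iio] at ha hb
      apply isCoprime_X_sub_C_of_isUnit_sub
      apply isUnit_iff_ne_zero.mpr
      apply sub_ne_zero.mpr
      exact hpow_ne _ _ (by omega)
    · intro m hm
      exact dvd_iff_isRoot.mpr (hroot m (Finset.mem_range.mp hm))
  obtain ⟨Q, hPQ⟩ := hGdvd
  have hQ0 : Q ≠ 0 := fun h => hP0 (by rw [hPQ, h, mul_zero])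
  have hdegs : P.natDegree = l + Q.natDegree := by
    rw [hPQ, natDegree_mul hGmonic.ne_zero hQ0, hGdeg]
  have hQdeg : Q.natDegree = 0 := by omega
  have hPdegeq : P.natDegree = l := by omega
  have hc : P.coeff l ≠ 0 := by
    rw [← hPdegeq]
    exact leadingCoeff_ne_zero.mpr hP0
  -- main functional identity
  have hId : P.comp (C y * X) * (X - C (y ^ (2*n))) = C (y ^ l) * P * (X - C (y ^ (2*n - l))) := by
    obtain ⟨c, hcQ⟩ : ∃ c, Q = C c := ⟨Q.coeff 0, eq_C_of_natDegree_eq_zero hQdeg⟩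
    rw [hPQ, hcQ, mul_comp, C_comp]
    linear_combination (C c : ℝ[X]) * auxKey y n l hl
  -- coefficients of the composition
  have hAeq : P.comp (C y * X) = ∑ t : Fin (l+1), C (d t * y ^ (t:ℕ)) * X ^ (t:ℕ) := by
    rw [hPdef]
    simp only [Polynomial.comp, eval₂_finset_sum, eval₂_mul, eval₂_C, eval₂_X_pow]
    apply Finset.sum_congr rfl
    intro t _
    rw [mul_pow, ← C_pow, ← mul_assoc, ← C_mul]
  have hAcoeff : ∀ s : ℕ, ∀ hs : s ≤ l, (P.comp (C y * X)).coeff s = P.coeff s * y ^ s := by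
    intro s hs
    rw [hAeq, auxCoeff (fun t => d t * y ^ (t:ℕ)) s hs, hPcoeff s hs]
  -- recursion on coefficients
  have hR : ∀ s, s < l → P.coeff s * (y^s - y^l) = P.coeff (s+1) * (y^(2*n+s+1) - y^(2*n)) := by
    intro s hs
    have h1 := congrArg (fun p : ℝ[X] => p.coeff (s+1)) hId
    rw [coeff_mul_X_sub_C, mul_assoc, coeff_C_mul, coeff_mul_X_sub_C] at h1
    rw [hAcoeff s (by omega), hAcoeff (s+1) (by omega)] at h1
    have e1 : y^l * y^(2*n-l) = y^(2*n) := by rw [← pow_add]; congr 1; omega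
    have e2 : y^(2*n) * y^(s+1) = y^(2*n+s+1) := by rw [← pow_add, Nat.add_assoc]
    linear_combination h1 + P.coeff (s+1) * e2 - P.coeff (s+1) * e1
  -- nonvanishing
  have hNZ : ∀ j, j ≤ l → P.coeff (l - j) ≠ 0 := by
    intro j
    induction j with
    | zero => intro _; simpa using hc
    | succ k ih =>
      intro hk
      have hs : l - (k+1) < l := by omega
      have hrec := hR (l-(k+1)) hs
      rw [show l - (k+1) + 1 = l - k by omega] at hrec
      have hb := ih (by omega)
      intro ha
      rw [ha, zero_mul] at hrec
      have h1 : y^(2*n + (l-(k+1)) + 1) - y^(2*n) ≠ 0 :=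
        sub_ne_zero.mpr (hpow_ne _ _ (by omega))
      rcases mul_eq_zero.mp hrec.symm with h | h
      · exact hb h
      · exact h1 h
  intro i hi
  have hb : P.coeff (i+1) ≠ 0 := by
    have h := hNZ (l-(i+1)) (by omega)
    rwa [show l - (l-(i+1)) = i+1 by omega] at h
  have hbd : d ⟨i+1, by omega⟩ ≠ 0 := by
    rw [← hPcoeff (i+1) (by omega)]
    exact hb
  refine ⟨hbd, ?_⟩
  rw [← hPcoeff i (by omega), ← hPcoeff (i+1) (by omega)]
  have hR' := hR i hi
  rw [div_eq_iff hb]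
  have hzl : y^((l:ℤ)-(i:ℤ)) = y^(l-i) := by
    rw [show (l:ℤ)-(i:ℤ) = ((l-i : ℕ) : ℤ) by omega, zpow_natCast]
  have hz2 : y^((n:ℤ)+1) = y^(n+1) := by
    rw [show (n:ℤ)+1 = ((n+1 : ℕ) : ℤ) by omega, zpow_natCast]
  have hz1 : y^((n:ℤ)) = y^(n:ℕ) := zpow_natCast y n
  have hz3 : y^((n:ℤ)-(i:ℤ)-1) = y^(n:ℕ) / y^(i+1) := by
    rw [show (n:ℤ)-(i:ℤ)-1 = (n:ℤ) - ((i+1 : ℕ) : ℤ) by omega, zpow_sub₀ hy0,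
      zpow_natCast, zpow_natCast]
  rw [hzl, hz2, hz1, hz3]
  have hden : y^(l-i) - (1:ℝ) ≠ 0 := by
    apply sub_ne_zero.mpr
    have := hpow_ne (l-i) 0 (by omega)
    simpa using this
  have hyi : (y:ℝ)^(i+1) ≠ 0 := pow_ne_zero _ hy0
  have hll : y^l = y^i * y^(l-i) := by rw [← pow_add]; congr 1; omega
  field_simp
  linear_combination (-(y:ℝ)) * hR' - P.coeff i * y * hll
end

section
/- Let q > 1 be a real number and n ≥ 1 an integer. For 0 ≤ l ≤ 2n, let 𝔐_l be the (l+1)×(l+1) real matrix with (i, s)-entry (-q)^{s(2n-i)} (0 ≤ i, s ≤ l), and let d_{i,l} (0 ≤ i ≤ l) be the components of the unique solution of 𝔐_l d = (0, …, 0, 1)^T. Let Δ be the (2n+1)×(2n+1) upper triangular matrix with Δ_{i,l} = d_{i,l} for 0 ≤ i ≤ l ≤ 2n and Δ_{i,l} = 0 for i > l, let v ∈ ℝ^{2n+1} (indexed by 0, …, 2n) have v_0 = 0 and v_k = (-q)^{n(2n-k) - 4n²} - (-q)^{-2n²} for 1 ≤ k ≤ 2n, and let K ∈ ℝ^{2n+1}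 be the unique solution of (𝔐_{2n} · Δ) · K = v. Then Δ·K = w, where w ∈ ℝ^{2n+1} is the vector with w_0 = -(-q)^{-2n²}, w_n = (-q)^{-4n²}, and all other components zero. -/
/-!
Since `𝔐_{2n}·(Δ·K) = v`, it suffices to check `𝔐_{2n}·w = v` and that `𝔐_{2n}` is invertible.
The latter holds because `𝔐_{2n}` is the Vandermonde matrix of the distinct nodes `(-q)^{2n-i}`;
the former because `w = a e₀ + b eₙ`, so `(𝔐_{2n} w)_k = a + b (-q)^{n(2n-k)}`.
-/

open Matrix

lemma Mmat_eq_vandermonde (q : ℝ) (n l : ℕ) :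
    Mmat q n l = vandermonde fun i : Fin (l + 1) => (-q) ^ (2 * n - (i : ℕ)) := by
  ext i s
  simp only [Mmat, of_apply, vandermonde_apply, ← pow_mul, mul_comm]

-- `l ≤ 2n` keeps the natural-number exponents `2n - i` from truncating, so the nodes are distinct.
lemma det_Mmat_ne_zero {q : ℝ} (hq : 1 < |q|) {n l : ℕ} (hl : l ≤ 2 * n) :
    (Mmat q n l).det ≠ 0 := by
  rw [Mmat_eq_vandermonde, det_vandermonde_ne_zero_iff]
  intro i j hij
  have h : |q| ^ (2 * n - (i : ℕ)) = |q| ^ (2 * n - (j : ℕ)) := by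
    simpa only [abs_pow, abs_neg] using congrArg abs hij
  have := (pow_right_strictMono₀ hq).injective h
  exact Fin.ext (by omega)

lemma Mmat_mulVec_single_add_single (q : ℝ) (n l : ℕ) (j : Fin (l + 1)) (a b : ℝ) :
    Mmat q n l *ᵥ (Pi.single 0 a + Pi.single j b) =
      fun k : Fin (l + 1) => a + b * (-q) ^ ((j : ℕ) * (2 * n - (k : ℕ))) := by
  ext k
  simp [mulVec_add, mulVec_single, Mmat, mul_comm]

lemma neg_zpow_add_zpow_mul_pow_eq_ite {K : Type*} [Field K] {x : K} (hx : x ≠ 0) {n k : ℕ}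
    (hk : k ≤ 2 * n) :
    -x ^ (-2 * (n : ℤ) ^ 2) + x ^ (-4 * (n : ℤ) ^ 2) * x ^ (n * (2 * n - k)) =
      if k = 0 then 0
      else x ^ ((n : ℤ) * (2 * (n : ℤ) - (k : ℤ)) - 4 * (n : ℤ) ^ 2) - x ^ (-2 * (n : ℤ) ^ 2) := by
  have hmul : x ^ (-4 * (n : ℤ) ^ 2) * x ^ (n * (2 * n - k)) =
      x ^ ((n : ℤ) * (2 * (n : ℤ) - (k : ℤ)) - 4 * (n : ℤ) ^ 2) := by
    rw [← zpow_natCast, ← zpow_add₀ hx]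
    push_cast [Nat.cast_sub hk]
    ring_nf
  rw [hmul]
  split_ifs with hk0
  · subst hk0
    ring_nf
  · ring

lemma Fin.single_zero_add_single_eq_ite {M : Type*} [AddMonoid M] {m j : ℕ} (hj0 : j ≠ 0)
    (hjm : j < m + 1) (a b : M) :
    Pi.single 0 a + Pi.single ⟨j, hjm⟩ b =
      fun i : Fin (m + 1) => if (i : ℕ) = 0 then a else if (i : ℕ) = j then b else 0 := by
  ext i
  by_cases hi0 : (i : ℕ) = 0
  · simp [Pi.single_apply, Fin.ext_iff, hi0, hj0.symm]
  · simp [Pi.single_apply, Fin.ext_iff, hi0]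

theorem stmt7_general (q : ℝ) (hq : 1 < q) (n : ℕ) (hn : 1 ≤ n)
    (Δ : Matrix (Fin (2 * n + 1)) (Fin (2 * n + 1)) ℝ)
    (v : Fin (2 * n + 1) → ℝ)
    (hv : ∀ k : Fin (2 * n + 1), v k =
      if (k : ℕ) = 0 then 0
      else (-q) ^ ((n : ℤ) * (2 * (n : ℤ) - ((k : ℕ) : ℤ)) - 4 * (n : ℤ) ^ 2)
        - (-q) ^ (-2 * (n : ℤ) ^ 2))
    (K : Fin (2 * n + 1) → ℝ)
    (hK : (Mmat q n (2 * n) * Δ).mulVec K = v) :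
    Δ.mulVec K = fun i : Fin (2 * n + 1) =>
      if (i : ℕ) = 0 then -(-q) ^ (-2 * (n : ℤ) ^ 2)
      else if (i : ℕ) = n then (-q) ^ (-4 * (n : ℤ) ^ 2)
      else 0 := by
  have hq_abs : 1 < |q| := hq.trans_le (le_abs_self q)
  have hq_ne : -q ≠ 0 := neg_ne_zero.mpr (by positivity)
  apply mulVec_injective_of_det_ne_zero (det_Mmat_ne_zero hq_abs le_rfl)
  rw [mulVec_mulVec, hK, ← Fin.single_zero_add_single_eq_ite (by omega : n ≠ 0) (by omega),
    Mmat_mulVec_single_add_single]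
  ext k
  rw [hv k]
  exact (neg_zpow_add_zpow_mul_pow_eq_ite hq_ne k.is_le).symm

theorem stmt7 (q : ℝ) (hq : 1 < q) (n : ℕ) (hn : 1 ≤ n)
    (d : ℕ → ℕ → ℝ)
    (hd : ∀ l, l ≤ 2 * n →
      (Mmat q n l).mulVec (fun i => d (i : ℕ) l) = Pi.single (Fin.last l) 1)
    (Δ : Matrix (Fin (2 * n + 1)) (Fin (2 * n + 1)) ℝ)
    (hΔ : ∀ i l : Fin (2 * n + 1),
      Δ i l = if (i : ℕ) ≤ (l : ℕ) then d (i : ℕ) (l : ℕ) else 0)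
    (v : Fin (2 * n + 1) → ℝ)
    (hv : ∀ k : Fin (2 * n + 1), v k =
      if (k : ℕ) = 0 then 0
      else (-q) ^ ((n : ℤ) * (2 * (n : ℤ) - ((k : ℕ) : ℤ)) - 4 * (n : ℤ) ^ 2)
        - (-q) ^ (-2 * (n : ℤ) ^ 2))
    (K : Fin (2 * n + 1) → ℝ)
    (hK : (Mmat q n (2 * n) * Δ).mulVec K = v) :
    Δ.mulVec K = fun i : Fin (2 * n + 1) =>
      if (i : ℕ) = 0 then -(-q) ^ (-2 * (n : ℤ) ^ 2)
      else if (i : ℕ) = n then (-q) ^ (-4 * (n : ℤ) ^ 2)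
      else 0 :=
  stmt7_general q hq n hn Δ v hv K hK
end

section
/- Let q > 1 be a real number and n ≥ 1 an integer. For 0 ≤ l ≤ 2n, let 𝔐_l be the (l+1)×(l+1) real matrix with (i, s)-entry (-q)^{s(2n-i)} (0 ≤ i, s ≤ l), and let d_{i,l} (0 ≤ i ≤ l) be the components of the unique solution of 𝔐_l d = (0, …, 0, 1)^T. Let Δ be the (2n+1)×(2n+1) upper triangular matrix with Δ_{i,l} = d_{i,l} for i ≤ l, let v ∈ ℝ^{2n+1} have v_0 = 0 and v_k = (-q)^{n(2n-k) - 4n²} - (-q)^{-2n²} for 1 ≤ k ≤ 2n, and let K = (K_0, …, K_{2n}) be the unique solution of (𝔐_{2n}·Δ)·K = v. Then: (i) K_0 = 0 and K_i = 0 for every n+1 ≤ i ≤ 2n; (ii) d_{n,n}·K_n = (-q)^{-4n²}; and (iii) for every 1 ≤ l ≤ n-1, d_{n-l,n-l}·K_{n-l} = (-q)^{n+l} · ((-q)^n - (-q)^{l-1}) / ((-q)^l - 1) · d_{n-l+1,n-l+1}·K_{n-l+1}. -/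
open Finset Polynomial

section GaussianBinomial

variable {F : Type*} [Field F] (t : F)

noncomputable def gaussianBinomial (n k : ℕ) : F :=
  ∏ j ∈ range k, (1 - t ^ (n - j)) / (1 - t ^ (j + 1))

@[simp]
lemma gaussianBinomial_zero_right (n : ℕ) : gaussianBinomial t n 0 = 1 := by
  simp [gaussianBinomial]

lemma gaussianBinomial_succ_right (n k : ℕ) :
    gaussianBinomial t n (k + 1) =
      gaussianBinomial t n k * ((1 - t ^ (n - k)) / (1 - t ^ (k + 1))) :=
  prod_range_succ _ _

lemma gaussianBinomial_eq_zero_of_lt {n k : ℕ} (h : n < k) : gaussianBinomial t n k = 0 :=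
  prod_eq_zero (mem_range.mpr h) (by simp)

lemma gaussianBinomial_succ_succ_eq_mul (n k : ℕ) :
    gaussianBinomial t (n + 1) (k + 1) =
      gaussianBinomial t n k * ((1 - t ^ (n + 1)) / (1 - t ^ (k + 1))) := by
  simp only [gaussianBinomial, prod_div_distrib]
  rw [prod_range_succ' (fun j => 1 - t ^ (n + 1 - j)), prod_range_succ]
  simp only [Nat.succ_sub_succ, Nat.sub_zero]
  exact mul_div_mul_comm _ _ _ _

lemma gaussianBinomial_self (ht : ∀ m, t ^ (m + 1) ≠ 1) (n : ℕ) : gaussianBinomial t n n = 1 := by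
  induction n with
  | zero => simp
  | succ n ih =>
    rw [gaussianBinomial_succ_succ_eq_mul, ih, div_self (sub_ne_zero.mpr (ht n).symm), one_mul]

lemma gaussianBinomial_succ_succ {k : ℕ} (ht : t ^ (k + 1) ≠ 1) (n : ℕ) :
    gaussianBinomial t (n + 1) (k + 1) =
      gaussianBinomial t n k + t ^ (k + 1) * gaussianBinomial t n (k + 1) := by
  rcases lt_or_ge n k with hnk | hkn
  · rw [gaussianBinomial_eq_zero_of_lt t hnk, gaussianBinomial_eq_zero_of_lt t (by omega : n < k + 1),
      gaussianBinomial_eq_zero_of_lt t (by omega : n + 1 < k + 1)]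
    ring
  have hpow : t ^ (k + 1) * t ^ (n - k) = t ^ (n + 1) := by rw [← pow_add]; congr 1; omega
  have hden : 1 - t ^ (k + 1) ≠ 0 := sub_ne_zero.mpr ht.symm
  rw [gaussianBinomial_succ_succ_eq_mul, gaussianBinomial_succ_right]
  field_simp
  linear_combination gaussianBinomial t n k * hpow

/-- The `q`-binomial theorem in Newton form. -/
theorem pow_eq_sum_gaussianBinomial_mul_prod (ht : ∀ m, t ^ (m + 1) ≠ 1) (a Y : F) (N : ℕ) :
    Y ^ N = ∑ m ∈ range (N + 1),
      a ^ (N - m) * gaussianBinomial t N m * ∏ j ∈ range m, (Y - a * t ^ j) := by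
  induction N with
  | zero => simp
  | succ N ih =>
    set P : ℕ → F := fun m => ∏ j ∈ range m, (Y - a * t ^ j)
    set g : ℕ → F := fun m => a ^ (N + 1 - m) * t ^ m * gaussianBinomial t N m * P m
    have hY : ∀ m, Y * P m = P (m + 1) + a * t ^ m * P m := fun m => by
      simp only [P, prod_range_succ]; ring
    have hshift : ∑ m ∈ range (N + 1), g m =
        ∑ m ∈ range (N + 1), a ^ (N - m) * t ^ (m + 1) * gaussianBinomial t N (m + 1) * P (m + 1)
          + a ^ (N + 1) := by
      have hlast : g (N + 1) = 0 := by
        simp [g, gaussianBinomial_eq_zero_of_lt t (Nat.lt_succ_self N)]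
      rw [← add_zero (∑ m ∈ range (N + 1), g m), ← hlast, ← sum_range_succ, sum_range_succ']
      simp [g, P]
    calc Y ^ (N + 1)
        = ∑ m ∈ range (N + 1), a ^ (N - m) * gaussianBinomial t N m * (Y * P m) := by
          rw [pow_succ', ih, mul_sum]
          exact sum_congr rfl fun m _ => by ring
      _ = ∑ m ∈ range (N + 1), a ^ (N - m) * gaussianBinomial t N m * P (m + 1)
            + ∑ m ∈ range (N + 1), g m := by
          rw [← sum_add_distrib]
          refine sum_congr rfl fun m hm => ?_
          have hpow : a ^ (N + 1 - m) = a ^ (N - m) * a := by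
            rw [← pow_succ, Nat.sub_add_comm (Nat.lt_succ_iff.mp (mem_range.mp hm))]
          simp only [g, hY, hpow]
          ring
      _ = ∑ m ∈ range (N + 1), a ^ (N - m) * gaussianBinomial t (N + 1) (m + 1) * P (m + 1)
            + a ^ (N + 1) := by
          simp only [hshift, gaussianBinomial_succ_succ t (ht _), ← add_assoc, ← sum_add_distrib]
          congr 1
          exact sum_congr rfl fun m _ => by ring
      _ = _ := by
          rw [sum_range_succ' _ (N + 1)]
          simp [P]

end GaussianBinomial

section Interpolation

variable {F : Type*} [Field F]

theorem Polynomial.eq_C_coeff_mul_nodal_of_natDegree_le {p : F[X]} {z : ℕ → F} {l : ℕ}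
    (hp : p.natDegree ≤ l) (hz : Set.InjOn z (range l)) (hroot : ∀ j < l, p.eval (z j) = 0) :
    p = C (p.coeff l) * Lagrange.nodal (range l) z := by
  have hdeg : (Lagrange.nodal (range l) z).natDegree = l := by
    rw [Lagrange.natDegree_nodal, card_range]
  have hlead : (Lagrange.nodal (range l) z).coeff l = 1 := by
    simpa [hdeg] using (Lagrange.nodal_monic (s := range l) (v := z)).coeff_natDegree
  refine eq_of_degree_sub_lt_of_eval_index_eq _ hz ?_ fun j hj => ?_
  · rw [card_range, degree_lt_iff_coeff_zero]
    intro m hm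
    rw [coeff_sub, coeff_C_mul]
    rcases (show l ≤ m by exact_mod_cast hm).eq_or_lt with rfl | hlm
    · rw [hlead, mul_one, sub_self]
    · rw [coeff_eq_zero_of_natDegree_lt (hp.trans_lt hlm),
        coeff_eq_zero_of_natDegree_lt (hdeg.trans_lt hlm), mul_zero, sub_zero]
  · rw [hroot j (mem_range.mp hj), eval_mul, Lagrange.eval_nodal_at_node hj, mul_zero]

theorem sum_mul_pow_eq_mul_prod_sub {c z : ℕ → F} {l : ℕ} (hz : Set.InjOn z (range l))
    (hroot : ∀ j < l, ∑ s ∈ range (l + 1), c s * z j ^ s = 0) (Y : F) :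
    ∑ s ∈ range (l + 1), c s * Y ^ s = c l * ∏ j ∈ range l, (Y - z j) := by
  set p : F[X] := ∑ s ∈ range (l + 1), C (c s) * X ^ s
  have heval (w : F) : p.eval w = ∑ s ∈ range (l + 1), c s * w ^ s := by simp [p, eval_finsetSum]
  have hcoeff : p.coeff l = c l := by simp [p, coeff_X_pow]
  have hdeg : p.natDegree ≤ l := natDegree_sum_le_of_forall_le _ _ fun s hs =>
    (natDegree_C_mul_X_pow_le _ _).trans (Nat.lt_succ_iff.mp (mem_range.mp hs))
  have hp := eq_C_coeff_mul_nodal_of_natDegree_le hdeg hz fun j hj => (heval _).trans (hroot j hj)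
  rw [← heval, hp, hcoeff, eval_mul, eval_C, Lagrange.eval_nodal]

def newtonMatrix (y : ℕ → F) (L : ℕ) : Matrix (Fin L) (Fin L) F :=
  Matrix.of fun i m => ∏ j ∈ range m, (y i - y j)

theorem newtonMatrix_mulVec_injective {y : ℕ → F} {L : ℕ} (hy : Set.InjOn y (range L)) :
    Function.Injective (newtonMatrix y L).mulVec := by
  rw [Matrix.mulVec_injective_iff_isUnit, Matrix.isUnit_iff_isUnit_det, isUnit_iff_ne_zero]
  have htri : (newtonMatrix y L).IsLowerTriangular := fun i m him =>
    prod_eq_zero (mem_range.mpr him) (sub_self _)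
  rw [Matrix.det_of_isLowerTriangular _ htri, prod_ne_zero_iff]
  intro i _
  refine (prod_ne_zero_iff (f := fun j => y i - y j) (s := range i)).mpr fun j hj => ?_
  refine sub_ne_zero.mpr fun h => (mem_range.mp hj).ne ?_
  exact (hy (mem_range.mpr ((mem_range.mp hj).trans i.isLt)) (mem_range.mpr i.isLt) h.symm)

end Interpolation

section GeometricNodes

variable {F : Type*} [Field F] {x : F}

lemma ne_zero_of_pow_injective (hx : Function.Injective (x ^ · : ℕ → F)) : x ≠ 0 := by
  rintro rfl
  exact absurd (@hx 1 2 (by simp)) (by norm_num)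

lemma pow_succ_ne_one_of_pow_injective (hx : Function.Injective (x ^ · : ℕ → F)) (m : ℕ) :
    x ^ (m + 1) ≠ 1 :=
  fun h => m.succ_ne_zero (@hx (m + 1) 0 (by simpa using h))

lemma inv_pow_succ_ne_one_of_pow_injective (hx : Function.Injective (x ^ · : ℕ → F)) (m : ℕ) :
    x⁻¹ ^ (m + 1) ≠ 1 := by
  rw [inv_pow, inv_ne_one]
  exact pow_succ_ne_one_of_pow_injective hx m

variable (x) (n : ℕ)

def node (i : ℕ) : F := x ^ (2 * n - i)

/-- The Newton coefficients of `x ^ (-4 n²) * (Y ^ n - node x n 0 ^ n)` at the nodes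
`node x n j`, read off from the `q`-binomial theorem. -/
noncomputable def newtonCoeff (m : ℕ) : F :=
  if m = 0 then 0 else x ^ (-4 * (n : ℤ) ^ 2) * (x ^ (2 * n)) ^ (n - m) * gaussianBinomial x⁻¹ n m

lemma newtonCoeff_zero : newtonCoeff x n 0 = 0 := if_pos rfl

lemma newtonCoeff_eq_zero_of_lt {m : ℕ} (hm : n < m) : newtonCoeff x n m = 0 := by
  simp [newtonCoeff, gaussianBinomial_eq_zero_of_lt _ hm]

variable {x n}

lemma newtonCoeff_self (hx : Function.Injective (x ^ · : ℕ → F)) (hn : n ≠ 0) :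
    newtonCoeff x n n = x ^ (-4 * (n : ℤ) ^ 2) := by
  rw [newtonCoeff, if_neg hn, Nat.sub_self, pow_zero, mul_one,
    gaussianBinomial_self _ (inv_pow_succ_ne_one_of_pow_injective hx), mul_one]

lemma newtonCoeff_sub_eq_mul (hx : Function.Injective (x ^ · : ℕ → F)) {l : ℕ} (h1 : 1 ≤ l)
    (h2 : l ≤ n - 1) :
    newtonCoeff x n (n - l) = x ^ ((n : ℤ) + (l : ℤ)) *
      ((x ^ (n : ℤ) - x ^ ((l : ℤ) - 1)) / (x ^ (l : ℤ) - 1)) * newtonCoeff x n (n - l + 1) := by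
  obtain ⟨k, rfl⟩ : ∃ k, l = k + 1 := ⟨l - 1, by omega⟩
  obtain ⟨m, rfl⟩ : ∃ m, n = m + (k + 1) := ⟨n - (k + 1), by omega⟩
  have hx0 := ne_zero_of_pow_injective hx
  have hk := sub_ne_zero.mpr (pow_succ_ne_one_of_pow_injective hx k)
  have hm := sub_ne_zero.mpr (pow_succ_ne_one_of_pow_injective hx m)
  have hinv (j : ℕ) : 1 - x⁻¹ ^ j = (x ^ j - 1) / x ^ j := by
    rw [eq_div_iff (pow_ne_zero _ hx0), sub_mul, one_mul, inv_pow,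
      inv_mul_cancel₀ (pow_ne_zero _ hx0)]
  have hratio : x ^ (m + (k + 1) + (k + 1)) * ((x ^ (m + (k + 1)) - x ^ k) / (x ^ (k + 1) - 1)) *
      ((1 - x⁻¹ ^ (k + 1)) / (1 - x⁻¹ ^ (m + 1))) = x ^ (2 * (m + (k + 1))) := by
    rw [hinv, hinv]
    field_simp
    ring
  simp only [newtonCoeff, show m + (k + 1) - (k + 1) = m by omega, show m ≠ 0 by omega,
    m.succ_ne_zero, if_false, gaussianBinomial_succ_right, show m + (k + 1) - m = k + 1 by omega,
    show m + (k + 1) - (m + 1) = k by omega]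
  rw [show ((k + 1 : ℕ) : ℤ) - 1 = k by push_cast; ring, ← Nat.cast_add]
  simp only [zpow_natCast]
  linear_combination (-(x ^ (-4 * ((m + (k + 1) : ℕ) : ℤ) ^ 2) * (x ^ (2 * (m + (k + 1)))) ^ k *
    gaussianBinomial x⁻¹ (m + (k + 1)) m)) * hratio

lemma node_injOn (hx : Function.Injective (x ^ · : ℕ → F)) :
    Set.InjOn (node x n) (range (2 * n + 1)) := fun i hi j hj h => by
  have := hx h
  simp only [coe_range, Set.mem_Iio] at hi hj
  omega

lemma node_eq_mul_inv_pow (hx : x ≠ 0) {j : ℕ} (hj : j ≤ 2 * n) :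
    node x n j = x ^ (2 * n) * x⁻¹ ^ j := by
  rw [node, inv_pow, eq_mul_inv_iff_mul_eq₀ (pow_ne_zero _ hx), ← pow_add, Nat.sub_add_cancel hj]

theorem newtonMatrix_node_mulVec_newtonCoeff (hx : Function.Injective (x ^ · : ℕ → F)) :
    (newtonMatrix (node x n) (2 * n + 1)).mulVec (fun m => newtonCoeff x n m) =
      fun k : Fin (2 * n + 1) => x ^ (-4 * (n : ℤ) ^ 2) * (node x n k ^ n - node x n 0 ^ n) := by
  funext k
  set a := x ^ (2 * n)
  set P : ℕ → F := fun m => ∏ j ∈ range m, (node x n k - node x n j)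
  have hexp := pow_eq_sum_gaussianBinomial_mul_prod x⁻¹ (inv_pow_succ_ne_one_of_pow_injective hx)
    a (node x n k) n
  have hP : ∀ m ∈ range (n + 1), ∏ j ∈ range m, (node x n k - a * x⁻¹ ^ j) = P m :=
    fun m hm => prod_congr rfl fun j hj => by
      rw [node_eq_mul_inv_pow (ne_zero_of_pow_injective hx) (j := j) (by simp at hm hj; omega)]
  rw [sum_congr rfl fun m hm => by rw [hP m hm], sum_range_succ'] at hexp
  have hsum : ∑ m : Fin (2 * n + 1), P m * newtonCoeff x n m =
      ∑ m ∈ range (n + 1), P m * newtonCoeff x n m := by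
    rw [Fin.sum_univ_eq_sum_range (fun m => P m * newtonCoeff x n m)]
    refine (sum_subset (range_subset_range.mpr (by omega)) fun m _ hm => ?_).symm
    rw [newtonCoeff_eq_zero_of_lt x n (by simpa using hm), mul_zero]
  rw [Matrix.mulVec, dotProduct]
  simp only [newtonMatrix, Matrix.of_apply]
  rw [hsum, sum_range_succ', hexp, show node x n 0 = a by simp [node, a]]
  simp only [newtonCoeff, P, Nat.succ_ne_zero, if_false, if_true, mul_zero, add_zero, Nat.sub_zero,
    gaussianBinomial_zero_right, prod_range_zero, mul_one, add_sub_cancel_right, mul_sum]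
  exact sum_congr rfl fun _ _ => by ring

lemma eq_mul_node_pow_sub_node_pow (hx : x ≠ 0) {v : Fin (2 * n + 1) → F}
    (hv : ∀ k : Fin (2 * n + 1), v k =
      if (k : ℕ) = 0 then 0
      else x ^ ((n : ℤ) * (2 * (n : ℤ) - ((k : ℕ) : ℤ)) - 4 * (n : ℤ) ^ 2)
        - x ^ (-2 * (n : ℤ) ^ 2)) :
    v = fun k : Fin (2 * n + 1) => x ^ (-4 * (n : ℤ) ^ 2) * (node x n k ^ n - node x n 0 ^ n) := by
  funext k
  have hpow : ∀ i ≤ 2 * n, x ^ (-4 * (n : ℤ) ^ 2) * node x n i ^ n =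
      x ^ ((n : ℤ) * (2 * (n : ℤ) - (i : ℤ)) - 4 * (n : ℤ) ^ 2) := fun i hi => by
    rw [node, ← pow_mul, ← zpow_natCast, ← zpow_add₀ hx]
    push_cast [hi]
    ring_nf
  rw [hv]
  split_ifs with hk
  · simp [show k = 0 from Fin.ext hk]
  · rw [mul_sub (x ^ _), hpow k (by omega), hpow 0 (by omega)]
    ring_nf

end GeometricNodes

section Mmat

lemma neg_pow_injective {q : ℝ} (hq : 1 < q) : Function.Injective ((-q) ^ · : ℕ → ℝ) :=
  fun a b h => pow_right_injective₀ (by linarith) hq.ne' <| by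
    simpa [abs_pow, abs_of_pos (by linarith : 0 < q)] using congrArg abs h

lemma Mmat_apply (q : ℝ) (n l : ℕ) (i s : Fin (l + 1)) :
    Mmat q n l i s = node (-q) n i ^ (s : ℕ) :=
  pow_mul' _ _ _

variable {q : ℝ} {n l : ℕ} {c : ℕ → ℝ}

lemma Mmat_mulVec_apply (i : Fin (l + 1)) :
    (Mmat q n l).mulVec (fun s => c s) i = ∑ s ∈ range (l + 1), c s * node (-q) n i ^ s := by
  simp only [Matrix.mulVec, dotProduct, Mmat_apply, mul_comm (node _ _ _ ^ _)]
  exact Fin.sum_univ_eq_sum_range (fun s => c s * node (-q) n i ^ s) (l + 1)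

theorem sum_mul_pow_eq_mul_prod_sub_node (hq : 1 < q) (hl : l ≤ 2 * n)
    (hc : (Mmat q n l).mulVec (fun s => c s) = Pi.single (Fin.last l) 1) (Y : ℝ) :
    ∑ s ∈ range (l + 1), c s * Y ^ s = c l * ∏ j ∈ range l, (Y - node (-q) n j) := by
  refine sum_mul_pow_eq_mul_prod_sub
    ((node_injOn (neg_pow_injective hq)).mono (by simp; omega)) (fun j hj => ?_) Y
  have := congrFun hc ⟨j, by omega⟩
  rwa [Mmat_mulVec_apply, Pi.single_apply, if_neg (by simp [Fin.ext_iff]; omega)] at this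

theorem ne_zero_of_Mmat_mulVec_eq_single (hq : 1 < q) (hl : l ≤ 2 * n)
    (hc : (Mmat q n l).mulVec (fun s => c s) = Pi.single (Fin.last l) 1) : c l ≠ 0 := by
  have := congrFun hc (Fin.last l)
  rw [Mmat_mulVec_apply, Pi.single_eq_same, Fin.val_last,
    sum_mul_pow_eq_mul_prod_sub_node hq hl hc] at this
  exact left_ne_zero_of_mul_eq_one this

theorem Mmat_mul_eq_newtonMatrix_mul_diagonal (hq : 1 < q) {d : ℕ → ℕ → ℝ}
    (hd : ∀ l, l ≤ 2 * n → (Mmat q n l).mulVec (fun i => d i l) = Pi.single (Fin.last l) 1)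
    {Δ : Matrix (Fin (2 * n + 1)) (Fin (2 * n + 1)) ℝ}
    (hΔ : ∀ i l : Fin (2 * n + 1), Δ i l = if (i : ℕ) ≤ (l : ℕ) then d i l else 0) :
    Mmat q n (2 * n) * Δ = newtonMatrix (node (-q) n) (2 * n + 1) *
      Matrix.diagonal (fun l : Fin (2 * n + 1) => d l l) := by
  ext i l
  have hcol := sum_mul_pow_eq_mul_prod_sub_node (c := (d · l)) hq (by omega) (hd l (by omega))
    (node (-q) n i)
  rw [Matrix.mul_diagonal, newtonMatrix, Matrix.of_apply, mul_comm _ (d l l), ← hcol,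
    Matrix.mul_apply]
  simp only [hΔ, Mmat_apply, mul_ite, mul_zero]
  rw [Fin.sum_univ_eq_sum_range (fun s => if s ≤ l then node (-q) n i ^ s * d s l else 0),
    ← sum_filter, show (range (2 * n + 1)).filter (· ≤ (l : ℕ)) = range (l + 1) by ext; simp; omega]
  exact sum_congr rfl fun _ _ => mul_comm _ _

end Mmat

theorem stmt8 (q : ℝ) (hq : 1 < q) (n : ℕ) (hn : 1 ≤ n)
    (d : ℕ → ℕ → ℝ)
    (hd : ∀ l, l ≤ 2 * n →
      (Mmat q n l).mulVec (fun i => d (i : ℕ) l) = Pi.single (Fin.last l) 1)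
    (Δ : Matrix (Fin (2 * n + 1)) (Fin (2 * n + 1)) ℝ)
    (hΔ : ∀ i l : Fin (2 * n + 1),
      Δ i l = if (i : ℕ) ≤ (l : ℕ) then d (i : ℕ) (l : ℕ) else 0)
    (v : Fin (2 * n + 1) → ℝ)
    (hv : ∀ k : Fin (2 * n + 1), v k =
      if (k : ℕ) = 0 then 0
      else (-q) ^ ((n : ℤ) * (2 * (n : ℤ) - ((k : ℕ) : ℤ)) - 4 * (n : ℤ) ^ 2)
        - (-q) ^ (-2 * (n : ℤ) ^ 2))
    (K : Fin (2 * n + 1) → ℝ)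
    (hK : (Mmat q n (2 * n) * Δ).mulVec K = v) :
    K ⟨0, by omega⟩ = 0 ∧
    (∀ i : ℕ, ∀ h1 : n + 1 ≤ i, ∀ h2 : i ≤ 2 * n, K ⟨i, by omega⟩ = 0) ∧
    d n n * K ⟨n, by omega⟩ = (-q) ^ (-4 * (n : ℤ) ^ 2) ∧
    (∀ l : ℕ, ∀ h1 : 1 ≤ l, ∀ h2 : l ≤ n - 1,
      d (n - l) (n - l) * K ⟨n - l, by omega⟩ =
        (-q) ^ ((n : ℤ) + (l : ℤ)) *
          (((-q) ^ (n : ℤ) - (-q) ^ ((l : ℤ) - 1)) / ((-q) ^ (l : ℤ) - 1)) *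
          (d (n - l + 1) (n - l + 1) * K ⟨n - l + 1, by omega⟩)) := by
  have hx := neg_pow_injective hq
  have hdK : (fun m : Fin (2 * n + 1) => d m m * K m) =
      fun m : Fin (2 * n + 1) => newtonCoeff (-q) n m := by
    refine newtonMatrix_mulVec_injective (node_injOn hx) ?_
    rw [newtonMatrix_node_mulVec_newtonCoeff hx,
      ← eq_mul_node_pow_sub_node_pow (ne_zero_of_pow_injective hx) hv, ← hK,
      Mmat_mul_eq_newtonMatrix_mul_diagonal hq hd hΔ, ← Matrix.mulVec_mulVec]
    exact congrArg _ (funext fun m => (Matrix.mulVec_diagonal (fun l : Fin _ => d l l) K m).symm)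
  have hdK' (m : ℕ) (hm : m < 2 * n + 1) : d m m * K ⟨m, hm⟩ = newtonCoeff (-q) n m :=
    congrFun hdK ⟨m, hm⟩
  have hK_eq_zero (m : ℕ) (hm : m < 2 * n + 1) (h : newtonCoeff (-q) n m = 0) : K ⟨m, hm⟩ = 0 :=
    (mul_eq_zero.mp ((hdK' m hm).trans h)).resolve_left
      (ne_zero_of_Mmat_mulVec_eq_single (c := (d · m)) hq (by omega) (hd m (by omega)))
  refine ⟨hK_eq_zero 0 _ (newtonCoeff_zero _ n),
    fun i h1 _ => hK_eq_zero i _ (newtonCoeff_eq_zero_of_lt _ n h1), ?_, fun l h1 h2 => ?_⟩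
  · rw [hdK', newtonCoeff_self hx (by omega)]
  · rw [hdK', hdK', newtonCoeff_sub_eq_mul hx h1 h2]
end

section
/- Let q > 1 be a real number. Then for every integer k ≥ 1, ∑_{j=1}^{k} (-1)^{j-1} · ∏_{m=1}^{j} ((-q)^{-m+1} - (-q)^{-k}) / (1 - (-q)^{-m}) = 1. -/
/-!
With `t = (-q)⁻¹` and `G j = ∏_{m=1}^{j} (t^m - t^k) / (1 - t^m)`, the numerator
`t^(m-1) - t^k` of the `j`-th summand is shifted by one from that of `G`, and since
`(t^j - t^k) + (1 - t^j) = 1 - t^k` the `j`-th product equals `G j + G (j - 1)`.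
The alternating sum therefore telescopes to `G 0 ± G k = 1`, because `G k` contains the
factor `t^k - t^k = 0`.
-/

open Finset

@[to_additive]
theorem Finset.prod_Icc_eq_prod_range_succ {M : Type*} [CommMonoid M] (f : ℕ → M) (n : ℕ) :
    ∏ i ∈ Icc 1 n, f i = ∏ i ∈ range n, f (i + 1) := by
  rw [← Finset.Ico_add_one_right_eq_Icc, prod_Ico_eq_prod_range, Nat.add_sub_cancel]
  simp only [add_comm]

theorem Finset.sum_range_neg_one_pow_mul_add {R : Type*} [CommRing R] (f : ℕ → R) (n : ℕ) :
    ∑ i ∈ range n, (-1) ^ i * (f (i + 1) + f i) = f 0 - (-1) ^ n * f n := by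
  induction n with
  | zero => simp
  | succ n ih => rw [sum_range_succ, ih, pow_succ]; ring

theorem pow_ne_one_of_abs_lt_one {R : Type*} [Ring R] [LinearOrder R] [IsStrictOrderedRing R]
    {t : R} (ht : |t| < 1) {m : ℕ} (hm : m ≠ 0) : t ^ m ≠ 1 := by
  intro h
  have := pow_lt_one₀ (abs_nonneg t) ht hm
  rw [← abs_pow, h, abs_one] at this
  exact lt_irrefl 1 this

section QRatioProd

variable {K : Type*} [Field K] (t T : K)

def qRatioProd (j : ℕ) : K := ∏ m ∈ range j, (t ^ (m + 1) - T) / (1 - t ^ (m + 1))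

theorem prod_range_succ_eq_qRatioProd_add {j : ℕ} (hj : t ^ (j + 1) ≠ 1) :
    ∏ m ∈ range (j + 1), (t ^ m - T) / (1 - t ^ (m + 1)) =
      qRatioProd t T (j + 1) + qRatioProd t T j := by
  have hd : 1 - t ^ (j + 1) ≠ 0 := sub_ne_zero.2 hj.symm
  unfold qRatioProd
  rw [prod_div_distrib, prod_range_succ' (fun m => t ^ m - T),
    prod_range_succ (fun m => 1 - t ^ (m + 1)), prod_range_succ, prod_div_distrib, pow_zero]
  field_simp
  ring

theorem qRatioProd_pow_self {k : ℕ} (hk : 1 ≤ k) : qRatioProd t (t ^ k) k = 0 := by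
  obtain ⟨j, rfl⟩ := Nat.exists_eq_add_of_le' hk
  simp [qRatioProd, prod_range_succ]

theorem sum_range_neg_one_pow_mul_prod_eq_one {k : ℕ} (hk : 1 ≤ k)
    (ht : ∀ m ∈ Icc 1 k, t ^ m ≠ 1) :
    ∑ j ∈ range k, (-1) ^ j * ∏ m ∈ range (j + 1), (t ^ m - t ^ k) / (1 - t ^ (m + 1)) = 1 := by
  calc _ = ∑ j ∈ range k,
        (-1) ^ j * (qRatioProd t (t ^ k) (j + 1) + qRatioProd t (t ^ k) j) := by
        refine sum_congr rfl fun j hj => ?_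
        rw [prod_range_succ_eq_qRatioProd_add t _ (ht _ ?_)]
        rw [mem_range] at hj
        exact mem_Icc.2 ⟨by omega, by omega⟩
    _ = 1 := by
        rw [sum_range_neg_one_pow_mul_add, qRatioProd_pow_self t hk]
        simp [qRatioProd]

end QRatioProd

theorem stmt9 (q : ℝ) (hq : 1 < q) (k : ℕ) (hk : 1 ≤ k) :
    ∑ j ∈ Finset.Icc 1 k, (-1 : ℝ) ^ (j - 1) *
      ∏ m ∈ Finset.Icc 1 j,
        (((-q) ^ (-(m : ℤ) + 1) - (-q) ^ (-(k : ℤ))) / (1 - (-q) ^ (-(m : ℤ)))) = 1 := by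
  set t := (-q)⁻¹
  have hzpow (m : ℕ) : (-q) ^ (-(m : ℤ)) = t ^ m := by rw [zpow_neg, zpow_natCast, inv_pow]
  have hzpow_succ (m : ℕ) : (-q) ^ (-((m + 1 : ℕ) : ℤ) + 1) = t ^ m := by
    rw [← hzpow]; congr 1; push_cast; ring
  have habs : |t| < 1 := by
    rw [abs_inv, abs_neg, abs_of_pos (by linarith)]
    exact inv_lt_one_of_one_lt₀ hq
  have ht : ∀ m ∈ Icc 1 k, t ^ m ≠ 1 := fun m hm =>
    pow_ne_one_of_abs_lt_one habs (by rw [mem_Icc] at hm; omega)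
  simpa only [sum_Icc_eq_sum_range_succ, prod_Icc_eq_prod_range_succ, hzpow, hzpow_succ,
    Nat.add_sub_cancel] using sum_range_neg_one_pow_mul_prod_eq_one t hk ht
end

section
/- Let q > 1 be a real number. For integers e_1, e_2, set s := min(0, e_1) + min(0, e_2), b := (min(0, e_1+1) - min(0, e_1)) + (min(0, e_2+1) - min(0, e_2)), and for integers λ_1, λ_2 ≥ 0 set F(λ_1, λ_2) := (-q)^{∑_{i∈{1,2}} ∑_{j∈{1,2}} min(0, e_i + λ_j)}. Define c_0 := -1/(q+1) and c_k := (-1)^{k+1} q^{-k} for k ≥ 1. Then for all (e_1, e_2) ∈ ℤ², s · (-q)^{2s} · ((-q)^{b-4} - (-q)^{-2}) = ∑_{k=0}^{∞} c_k · (-q)^{-4} · ( F(k, 1) - (-q)² · F(k, 0) ), where the series on the right converges absolutely. -/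
/-! Write `x = -q`. Then `c_0 = 1 / (x - 1)` and `c_k = -x^{-k}` for `k ≥ 1`, so for `N ≥ 0`
`∑_k c_k x^{min(0, k - N)} = -N x^{-N}`: each of the terms `1 ≤ k ≤ N` is `-x^{-N}`, and the
geometric tail `k > N` cancels the term `k = 0`. If `e_1, e_2 < 0` then
`min(0, e_i + 1) = min(0, e_i) + 1`, so `F(k, 1) = x² F(k, 0)` and both sides vanish. Otherwise,
by symmetry `e_1 ≥ 0`, and the summand is `c_k x^{min(0, e_2 + k)}` times a factor independent
of `k`, which reduces the identity to the sum above with `N = -min(0, e_2)`. -/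

/-- F(λ₁, λ₂) = (-q)^{∑_{i∈{1,2}} ∑_{j∈{1,2}} min(0, e_i + λ_j)}. -/
noncomputable def F2 (q : ℝ) (e1 e2 : ℤ) (l1 l2 : ℕ) : ℝ :=
  (-q) ^ (min 0 (e1 + (l1 : ℤ)) + min 0 (e1 + (l2 : ℤ))
    + min 0 (e2 + (l1 : ℤ)) + min 0 (e2 + (l2 : ℤ)))

/-- The coefficients c_0 = -1/(q+1) and c_k = (-1)^{k+1} q^{-k} for k ≥ 1. -/
noncomputable def cC (q : ℝ) (k : ℕ) : ℝ :=
  if k = 0 then -1 / (q + 1) else (-1) ^ (k + 1) * q ^ (-(k : ℤ))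

theorem zpow_two_mul_mul_sub {K : Type*} [Field K] {x : K} (hx : x ≠ 0) (a b : ℤ) :
    x ^ (2 * a) * (x ^ (b - a - 4) - x ^ (-2 : ℤ)) =
      x ^ a * (x ^ (-4 : ℤ) * (x ^ b - x ^ 2 * x ^ a)) := by
  rw [two_mul, zpow_add₀ hx, zpow_sub₀ hx, zpow_sub₀ hx]
  field_simp

theorem hasSum_zpow_neg_add_succ {K : Type*} [NormedField K] {x : K} (hx : 1 < ‖x‖) (N : ℕ) :
    HasSum (fun j : ℕ => x ^ (-((j + (N + 1) : ℕ) : ℤ))) (x ^ (-(N : ℤ)) / (x - 1)) := by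
  have hx0 : x ≠ 0 := norm_pos_iff.mp (one_pos.trans hx)
  have hr : ‖x⁻¹‖ < 1 := by rw [norm_inv]; exact inv_lt_one_of_one_lt₀ hx
  have hterm (j : ℕ) :
      x ^ (-((j + (N + 1) : ℕ) : ℤ)) = x ^ (-((N + 1 : ℕ) : ℤ)) * x⁻¹ ^ j := by
    rw [← zpow_natCast x⁻¹, inv_zpow', ← zpow_add₀ hx0]
    push_cast; ring_nf
  have hsum : x ^ (-(N : ℤ)) / (x - 1) = x ^ (-((N + 1 : ℕ) : ℤ)) * (1 - x⁻¹)⁻¹ := by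
    rw [zpow_neg, zpow_neg, zpow_natCast, zpow_natCast]
    field_simp
    ring
  simp only [hterm, hsum]
  exact (hasSum_geometric_of_norm_lt_one hr).mul_left _

section

variable {q : ℝ}

theorem cC_zero : cC q 0 = (-q - 1)⁻¹ := by
  rw [cC, if_pos rfl, ← neg_add', inv_neg, neg_div, one_div]

theorem cC_of_ne_zero {k : ℕ} (hk : k ≠ 0) : cC q k = -(-q) ^ (-(k : ℤ)) := by
  rw [cC, if_neg hk, zpow_neg, zpow_neg, zpow_natCast, zpow_natCast, neg_pow q, mul_inv,
    ← inv_pow (-1 : ℝ), inv_neg_one]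
  ring

theorem hasSum_cC_mul_zpow_min_sub (hq : 1 < q) (N : ℕ) :
    HasSum (fun k : ℕ => cC q k * (-q) ^ min 0 ((k : ℤ) - N)) (-N * (-q) ^ (-(N : ℤ))) := by
  have hx : 1 < ‖-q‖ := by rwa [norm_neg, Real.norm_eq_abs, abs_of_pos (by linarith)]
  have hx0 : -q ≠ 0 := by linarith
  set f : ℕ → ℝ := fun k => cC q k * (-q) ^ min 0 ((k : ℤ) - N) with hf
  have htail : HasSum (fun j => f (j + (N + 1))) (-((-q) ^ (-(N : ℤ)) / (-q - 1))) := by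
    have hterm (j : ℕ) : f (j + (N + 1)) = -(-q) ^ (-((j + (N + 1) : ℕ) : ℤ)) := by
      simp only [hf]
      rw [cC_of_ne_zero (by omega), show min 0 (((j + (N + 1) : ℕ) : ℤ) - N) = 0 by omega,
        zpow_zero, mul_one]
    simp only [hterm]
    exact (hasSum_zpow_neg_add_succ hx N).neg
  have hhead : ∑ i ∈ Finset.range (N + 1), f i =
      (-q) ^ (-(N : ℤ)) / (-q - 1) - N * (-q) ^ (-(N : ℤ)) := by
    have hbody : ∀ i ∈ Finset.range N, f (i + 1) = -(-q) ^ (-(N : ℤ)) := by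
      intro i hi
      have hiN := Finset.mem_range.mp hi
      simp only [hf]
      rw [cC_of_ne_zero i.succ_ne_zero, neg_mul, ← zpow_add₀ hx0]
      congr 2
      omega
    rw [Finset.sum_range_succ', Finset.sum_congr rfl hbody, Finset.sum_const, Finset.card_range,
      nsmul_eq_mul]
    simp only [hf]
    rw [cC_zero, show min 0 (((0 : ℕ) : ℤ) - N) = -N by omega]
    ring
  have h := (hasSum_nat_add_iff (N + 1)).mp htail
  rwa [hhead, neg_add_eq_sub, sub_sub_cancel_left, ← neg_mul] at h

theorem hasSum_cC_mul_zpow_min (hq : 1 < q) (e : ℤ) :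
    HasSum (fun k : ℕ => cC q k * (-q) ^ min 0 (e + k)) (min 0 e * (-q) ^ min 0 e) := by
  obtain ⟨N, hN⟩ : ∃ N : ℕ, min 0 e = -N := ⟨(-min 0 e).toNat, by omega⟩
  have hmin (k : ℕ) : min 0 (e + k) = min 0 ((k : ℤ) - N) := by omega
  simp_rw [hmin, hN]
  push_cast
  exact hasSum_cC_mul_zpow_min_sub hq N

theorem F2_comm (e1 e2 : ℤ) (l1 l2 : ℕ) : F2 q e1 e2 l1 l2 = F2 q e2 e1 l1 l2 := by
  rw [F2, F2]
  ring_nf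

theorem F2_one_of_neg (hq : q ≠ 0) {e1 e2 : ℤ} (h1 : e1 < 0) (h2 : e2 < 0) (k : ℕ) :
    F2 q e1 e2 k 1 = (-q) ^ 2 * F2 q e1 e2 k 0 := by
  rw [F2, F2, ← zpow_natCast, ← zpow_add₀ (neg_ne_zero.mpr hq)]
  congr 1
  omega

theorem hasSum_cC_mul_F2_sub_of_nonneg (hq : 1 < q) {e1 : ℤ} (h1 : 0 ≤ e1) (e2 : ℤ) :
    HasSum (fun k : ℕ =>
        cC q k * (-q) ^ (-4 : ℤ) * (F2 q e1 e2 k 1 - (-q) ^ 2 * F2 q e1 e2 k 0))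
      (((min 0 e1 + min 0 e2 : ℤ) : ℝ) * (-q) ^ (2 * (min 0 e1 + min 0 e2)) *
        ((-q) ^ ((min 0 (e1 + 1) - min 0 e1) + (min 0 (e2 + 1) - min 0 e2) - 4)
          - (-q) ^ (-2 : ℤ))) := by
  have hx : -q ≠ 0 := neg_ne_zero.mpr (by linarith)
  have hmin1 : min 0 e1 = 0 := min_eq_left h1
  have hmin2 : min 0 (e1 + 1) = 0 := by omega
  have hterm (k : ℕ) :
      cC q k * (-q) ^ (-4 : ℤ) * (F2 q e1 e2 k 1 - (-q) ^ 2 * F2 q e1 e2 k 0) =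
        cC q k * (-q) ^ min 0 (e2 + k) *
          ((-q) ^ (-4 : ℤ) * ((-q) ^ min 0 (e2 + 1) - (-q) ^ 2 * (-q) ^ min 0 e2)) := by
    simp only [F2, Nat.cast_one, Nat.cast_zero, add_zero, hmin1, hmin2,
      show min 0 (e1 + k) = 0 by omega, zero_add, zpow_add₀ hx]
    ring
  simp only [hterm, hmin1, hmin2, zero_add, sub_self, mul_assoc, zpow_two_mul_mul_sub hx]
  simpa only [mul_assoc] using (hasSum_cC_mul_zpow_min hq e2).mul_right
    ((-q) ^ (-4 : ℤ) * ((-q) ^ min 0 (e2 + 1) - (-q) ^ 2 * (-q) ^ min 0 e2))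

theorem hasSum_cC_mul_F2_sub (hq : 1 < q) (e1 e2 : ℤ) :
    HasSum (fun k : ℕ =>
        cC q k * (-q) ^ (-4 : ℤ) * (F2 q e1 e2 k 1 - (-q) ^ 2 * F2 q e1 e2 k 0))
      (((min 0 e1 + min 0 e2 : ℤ) : ℝ) * (-q) ^ (2 * (min 0 e1 + min 0 e2)) *
        ((-q) ^ ((min 0 (e1 + 1) - min 0 e1) + (min 0 (e2 + 1) - min 0 e2) - 4)
          - (-q) ^ (-2 : ℤ))) := by
  rcases le_or_gt 0 e1 with h1 | h1
  · exact hasSum_cC_mul_F2_sub_of_nonneg hq h1 e2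
  rcases le_or_gt 0 e2 with h2 | h2
  · have h := hasSum_cC_mul_F2_sub_of_nonneg hq h2 e1
    simp only [F2_comm e2 e1] at h
    rwa [add_comm (min 0 e2), add_comm (min 0 (e2 + 1) - min 0 e2)] at h
  · have hq0 : q ≠ 0 := by linarith
    simp only [F2_one_of_neg hq0 h1 h2, sub_self, mul_zero]
    rw [show (min 0 (e1 + 1) - min 0 e1) + (min 0 (e2 + 1) - min 0 e2) - 4 = -2 by omega,
      sub_self, mul_zero]
    exact hasSum_zero

end

theorem stmt12 (q : ℝ) (hq : 1 < q) (e1 e2 : ℤ) :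
    Summable (fun k : ℕ =>
      |cC q k * (-q) ^ (-4 : ℤ) * (F2 q e1 e2 k 1 - (-q) ^ 2 * F2 q e1 e2 k 0)|) ∧
    ((min 0 e1 + min 0 e2 : ℤ) : ℝ) * (-q) ^ (2 * (min 0 e1 + min 0 e2)) *
      ((-q) ^ ((min 0 (e1 + 1) - min 0 e1) + (min 0 (e2 + 1) - min 0 e2) - 4)
        - (-q) ^ (-2 : ℤ)) =
      ∑' k : ℕ, cC q k * (-q) ^ (-4 : ℤ) * (F2 q e1 e2 k 1 - (-q) ^ 2 * F2 q e1 e2 k 0) := by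
  have h := hasSum_cC_mul_F2_sub hq e1 e2
  exact ⟨h.summable.abs, h.tsum_eq.symm⟩
end

section
/- Let q > 1 be a real number. Then for every integer e, min(0, e) · (-q)^{min(0, e)} = -(1/(q+1)) · (-q)^{min(0, e)} + ∑_{k=1}^{∞} (-1)^{k+1} q^{-k} (-q)^{min(0, e+k)}, where the series on the right converges absolutely. -/
/-! With x = -q, the k-th term of the series is -x^{min(e,-k)}, so everything reduces to
S(e) = ∑_{k ≥ 1} x^{min(e,-k)} for |x| > 1, which only depends on min(0,e). Splitting off the first
term gives S(e) = x^{min(e,-1)} + x⁻¹ S(e+1), and S(0) = 1/(x-1) is a geometric series, so downward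
induction gives S(-n) = x^{-n} (1/(x-1) + n). -/

theorem zpow_neg_natCast_add_one {K : Type*} [DivisionRing K] (x : K) (k : ℕ) :
    x ^ (-((k : ℤ) + 1)) = x⁻¹ * x⁻¹ ^ k := by
  rw [← pow_succ', inv_pow, ← zpow_natCast, ← zpow_neg]
  push_cast
  rfl

section
variable {𝕜 : Type*} [NormedField 𝕜] {x : 𝕜}

theorem summable_norm_zpow_min_neg_succ (hx : 1 < ‖x‖) (e : ℤ) :
    Summable fun k : ℕ => ‖x ^ min e (-((k : ℤ) + 1))‖ := by
  have hx₀ : 0 < ‖x‖ := one_pos.trans hx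
  refine Summable.of_nonneg_of_le (fun _ => norm_nonneg _) (fun k => ?_)
    ((summable_geometric_of_lt_one (inv_nonneg.2 hx₀.le) (inv_lt_one_of_one_lt₀ hx)).mul_left ‖x‖⁻¹)
  calc ‖x ^ min e (-((k : ℤ) + 1))‖ = ‖x‖ ^ min e (-((k : ℤ) + 1)) := norm_zpow _ _
    _ ≤ ‖x‖ ^ (-((k : ℤ) + 1)) := zpow_le_zpow_right₀ hx.le (min_le_right _ _)
    _ = ‖x‖⁻¹ * ‖x‖⁻¹ ^ k := zpow_neg_natCast_add_one _ k

theorem tsum_zpow_neg_succ (hx : 1 < ‖x‖) : ∑' k : ℕ, x ^ (-((k : ℤ) + 1)) = (x - 1)⁻¹ := by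
  have hx₀ : x ≠ 0 := norm_pos_iff.1 (one_pos.trans hx)
  have hgeom : ‖x⁻¹‖ < 1 := by rw [norm_inv]; exact inv_lt_one_of_one_lt₀ hx
  calc ∑' k : ℕ, x ^ (-((k : ℤ) + 1)) = ∑' k : ℕ, x⁻¹ * x⁻¹ ^ k := by
        simp only [zpow_neg_natCast_add_one]
    _ = (x - 1)⁻¹ := by
      rw [tsum_mul_left, tsum_geometric_of_norm_lt_one hgeom]
      have : x - 1 ≠ 0 := fun h => by simp [sub_eq_zero.1 h] at hx
      field_simp

variable [CompleteSpace 𝕜]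

theorem tsum_zpow_min_neg_succ_eq_add (hx : 1 < ‖x‖) (e : ℤ) :
    ∑' k : ℕ, x ^ min e (-((k : ℤ) + 1)) =
      x ^ min e (-1) + x⁻¹ * ∑' k : ℕ, x ^ min (e + 1) (-((k : ℤ) + 1)) := by
  have hx₀ : x ≠ 0 := norm_pos_iff.1 (one_pos.trans hx)
  rw [(summable_norm_zpow_min_neg_succ hx e).of_norm.tsum_eq_zero_add, ← tsum_mul_left]
  congr 2 with k
  rw [← zpow_neg_one, ← zpow_add₀ hx₀]
  congr 1; push_cast; omega

theorem tsum_zpow_min_neg_natCast (hx : 1 < ‖x‖) (n : ℕ) :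
    ∑' k : ℕ, x ^ min (-(n : ℤ)) (-((k : ℤ) + 1)) = x ^ (-(n : ℤ)) * ((x - 1)⁻¹ + n) := by
  have hx₀ : x ≠ 0 := norm_pos_iff.1 (one_pos.trans hx)
  induction n with
  | zero => simpa using tsum_zpow_neg_succ hx
  | succ n ih =>
    rw [tsum_zpow_min_neg_succ_eq_add hx, show -((n + 1 : ℕ) : ℤ) + 1 = -n by push_cast; ring, ih,
      min_eq_left (by omega)]
    rw [show -((n + 1 : ℕ) : ℤ) = -n + -1 by push_cast; ring, zpow_add₀ hx₀]
    push_cast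
    field_simp
    ring

theorem intCast_min_zero_mul_zpow_eq_sub_tsum (hx : 1 < ‖x‖) (e : ℤ) :
    ((min 0 e : ℤ) : 𝕜) * x ^ min 0 e =
      (x - 1)⁻¹ * x ^ min 0 e - ∑' k : ℕ, x ^ min e (-((k : ℤ) + 1)) := by
  obtain ⟨n, hn⟩ : ∃ n : ℕ, min 0 e = -(n : ℤ) := ⟨(-min 0 e).toNat, by omega⟩
  have htsum : ∑' k : ℕ, x ^ min e (-((k : ℤ) + 1)) =
      ∑' k : ℕ, x ^ min (-(n : ℤ)) (-((k : ℤ) + 1)) := by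
    congr 1; ext k; congr 1; omega
  rw [htsum, tsum_zpow_min_neg_natCast hx, hn]
  push_cast
  ring

end

theorem neg_one_pow_mul_zpow_mul_neg_zpow_min {K : Type*} [Field K] {y : K} (hy : y ≠ 0) (e : ℤ)
    (k : ℕ) :
    (-1 : K) ^ ((k + 1) + 1) * y ^ (-((k : ℤ) + 1)) * (-y) ^ min 0 (e + ((k : ℤ) + 1)) =
      -(-y) ^ min e (-((k : ℤ) + 1)) := by
  have hsplit : min e (-((k : ℤ) + 1)) = -((k : ℤ) + 1) + min 0 (e + ((k : ℤ) + 1)) := by omega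
  rw [hsplit, zpow_add₀ (neg_ne_zero.2 hy), zpow_neg_natCast_add_one, zpow_neg_natCast_add_one,
    inv_neg, neg_pow]
  ring

theorem stmt14 (q : ℝ) (hq : 1 < q) (e : ℤ) :
    Summable (fun k : ℕ =>
      |(-1 : ℝ) ^ ((k + 1) + 1) * q ^ (-((k : ℤ) + 1)) * (-q) ^ (min 0 (e + ((k : ℤ) + 1)))|) ∧
    ((min 0 e : ℤ) : ℝ) * (-q) ^ (min 0 e) =
      -(1 / (q + 1)) * (-q) ^ (min 0 e) +
        ∑' k : ℕ,
          (-1 : ℝ) ^ ((k + 1) + 1) * q ^ (-((k : ℤ) + 1)) * (-q) ^ (min 0 (e + ((k : ℤ) + 1))) := by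
  have hq₀ : q ≠ 0 := (one_pos.trans hq).ne'
  have hx : 1 < ‖-q‖ := by rwa [norm_neg, Real.norm_of_nonneg (one_pos.trans hq).le]
  simp only [neg_one_pow_mul_zpow_mul_neg_zpow_min hq₀, abs_neg, tsum_neg]
  refine ⟨summable_norm_zpow_min_neg_succ hx e, ?_⟩
  rw [intCast_min_zero_mul_zpow_eq_sub_tsum hx, show (-q - 1)⁻¹ = -(1 / (q + 1)) by
    rw [one_div, ← inv_neg, neg_add']]
  ring
end
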